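/- arXiv:1710.08566 — 11 statements merged into one kernel-verified Lean document; each statement's English description precedes it below -/
import Mathlib

section
/- Let F be a field of characteristic zero and let σ be the shift automorphism of F(k) sending k to k+1. If f ∈ F(k) is shift-reduced (i.e., f = p/q with p, q coprime polynomials and gcd(p, σ^i(q)) = 1 for all integers i) and there exists a nonzero rational function r ∈ F(k) with f = σ(r)/r, then r ∈ F and f = 1. -/
open Polynomial

/-! If `f = σ r / r` with `r = a / b` in lowest terms, then `p · a · b(k+1) = q · b · a(k+1)`.
Suppose `b` has a root `γ` (over an algebraic closure). Only finitely many of the points `γ + n`,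
`n ∈ ℤ`, are roots of `b`; at the largest one `x` the identity forces `p(x) = 0`, and one step
below the smallest one `y` it forces `q(y - 1) = 0`. Since `y - 1 - x` is an integer, this
contradicts `gcd(p, σⁱ q) = 1`. Hence `b` is constant, and by the symmetric argument so is `a`. -/

namespace Polynomial

theorem exists_isRoot_and_not_isRoot_add {R : Type*} [CommRing R] [IsDomain R] [CharZero R]
    {B : R[X]} (hB : B ≠ 0) {γ s : R} (hγ : B.IsRoot γ) (hs : s ≠ 0) :
    ∃ n : ℕ, B.IsRoot (γ + n * s) ∧ ¬ B.IsRoot (γ + n * s + s) := by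
  by_contra! H
  have hall (n : ℕ) : B.IsRoot (γ + n * s) := by
    induction n with
    | zero => simpa using hγ
    | succ n ih => simpa [add_mul, add_assoc] using H n ih
  have hinj : Function.Injective fun n : ℕ => γ + n * s := fun m n hmn => by
    simpa [hs] using hmn
  exact Set.infinite_of_injective_forall_mem hinj hall (finite_setOfPred_isRoot hB)

theorem zpow_apply_eq_comp_X_add_C {R : Type*} [CommRing R] {τ : R[X] ≃ₐ[R] R[X]}
    (hτ : τ X = X + 1) (i : ℤ) (u : R[X]) : (τ ^ i) u = u.comp (X + C (i : R)) := by
  have hX (i : ℤ) : (τ ^ i) X = X + C (i : R) := by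
    induction i using Int.induction_on with
    | zero => simp
    | succ i ih =>
      rw [zpow_add_one, AlgEquiv.mul_apply, hτ, map_add, map_one, ih]
      simp [add_assoc]
    | pred i ih =>
      have h : (τ ^ (-(i : ℤ) - 1)) X + 1 = (τ ^ (-(i : ℤ))) X := by
        rw [← map_one (τ ^ (-(i : ℤ) - 1)), ← map_add, ← hτ, ← AlgEquiv.mul_apply, ← zpow_add_one,
          sub_add_cancel]
      rw [eq_sub_of_add_eq h, ih]
      simp [sub_eq_add_neg, add_assoc]
  nth_rw 1 [← aeval_X_left_apply u]
  rw [← aeval_algHom_apply, hX, comp_eq_aeval]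

theorem isCoprime_comp_X_add_C_comm {R : Type*} [CommRing R] {p q : R[X]}
    (h : ∀ i : ℤ, IsCoprime p (q.comp (X + C (i : R)))) (i : ℤ) :
    IsCoprime q (p.comp (X + C (i : R))) := by
  have hX : (X + C ((-i : ℤ) : R)).comp (X + C (i : R)) = X := by simp [add_assoc]
  have := ((h (-i)).map (compRingHom (X + C (i : R)))).symm
  rwa [coe_compRingHom_apply, coe_compRingHom_apply, comp_assoc, hX, comp_X] at this

theorem natDegree_eq_zero_of_mul_comp_X_add_one_eq {F : Type*} [Field F] [CharZero F]
    {a b p q : F[X]} (hab : IsCoprime a b) (hb : b ≠ 0)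
    (h : p * a * b.comp (X + 1) = q * b * a.comp (X + 1))
    (hpq : ∀ i : ℤ, IsCoprime p (q.comp (X + C (i : F)))) : b.natDegree = 0 := by
  by_contra hdeg
  let K := AlgebraicClosure F
  have hev (x : K) :
      aeval x p * aeval x a * aeval (x + 1) b = aeval x q * aeval x b * aeval (x + 1) a := by
    simpa [aeval_comp] using congrArg (aeval x) h
  have ha_ne (x : K) (hx : aeval x b = 0) : aeval x a ≠ 0 :=
    (aeval_ne_zero_of_isCoprime hab x).resolve_right (not_not.2 hx)
  have hb_map : b.map (algebraMap F K) ≠ 0 := Polynomial.map_ne_zero hb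
  obtain ⟨γ, hγ⟩ := IsAlgClosed.exists_root (b.map (algebraMap F K))
    (by rw [degree_map]; exact fun h0 => hdeg (natDegree_eq_of_degree_eq_some h0))
  obtain ⟨m, hm, hm'⟩ := exists_isRoot_and_not_isRoot_add hb_map hγ one_ne_zero
  obtain ⟨n, hn, hn'⟩ := exists_isRoot_and_not_isRoot_add hb_map hγ (neg_ne_zero.2 one_ne_zero)
  simp only [IsRoot.def, eval_map_algebraMap, mul_one, mul_neg_one, ← sub_eq_add_neg]
    at hm hm' hn hn'
  have hp : aeval (γ + m) p = 0 := by
    have := hev (γ + m)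
    rw [hm, mul_zero, zero_mul] at this
    simpa [ha_ne _ hm, hm'] using this
  have hq : aeval (γ - n - 1) q = 0 := by
    have := hev (γ - n - 1)
    rw [sub_add_cancel, hn, mul_zero] at this
    simpa [ha_ne _ hn, hn'] using this.symm
  refine (aeval_ne_zero_of_isCoprime (hpq (-n - m - 1)) (γ + m)).elim (· hp) (· ?_)
  rw [aeval_comp, ← hq]
  simp only [map_add, aeval_X, aeval_C]
  push_cast
  congr 2
  ring

end Polynomial

namespace RatFunc

variable {F : Type*} [Field F]

theorem mul_num_mul_eq_of_div_eq_map_div (τ : F[X] ≃ₐ[F] F[X]) (σ : RatFunc F ≃ₐ[F] RatFunc F)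
    (hcompat : ∀ u : F[X], σ (algebraMap F[X] (RatFunc F) u) = algebraMap F[X] (RatFunc F) (τ u))
    {p q : F[X]} (hq : q ≠ 0) {r : RatFunc F} (hr : r ≠ 0)
    (h : algebraMap F[X] (RatFunc F) p / algebraMap F[X] (RatFunc F) q = σ r / r) :
    p * r.num * τ r.denom = q * r.denom * τ r.num := by
  have ha := algebraMap_ne_zero (num_ne_zero hr)
  have hb := algebraMap_ne_zero r.denom_ne_zero
  have hτb := algebraMap_ne_zero ((map_ne_zero_iff τ τ.injective).2 r.denom_ne_zero)
  have hq' := algebraMap_ne_zero hq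
  have hr' := (num_div_denom r).symm
  set a := r.num
  set b := r.denom
  rw [hr', map_div₀, hcompat, hcompat] at h
  field_simp at h
  apply algebraMap_injective F
  simp only [map_mul]
  linear_combination h

theorem exists_eq_C_of_natDegree_num_denom_eq_zero {r : RatFunc F} (hnum : r.num.natDegree = 0)
    (hdenom : r.denom.natDegree = 0) : ∃ c : F, r = C c := by
  obtain ⟨c, hc⟩ : ∃ c, r.num = Polynomial.C c := ⟨_, eq_C_of_natDegree_eq_zero hnum⟩
  refine ⟨c, ?_⟩
  rw [← num_div_denom r, hc, (monic_denom r).natDegree_eq_zero.1 hdenom, map_one, div_one,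
    algebraMap_C]

end RatFunc

theorem shift_reduced_sigma_quotient_eq_one_general
    (F : Type*) [Field F] [CharZero F]
    (τ : Polynomial F ≃ₐ[F] Polynomial F) (hτ : τ X = X + 1)
    (σ : RatFunc F ≃ₐ[F] RatFunc F)
    (hcompat : ∀ p : Polynomial F,
      σ (algebraMap (Polynomial F) (RatFunc F) p) =
        algebraMap (Polynomial F) (RatFunc F) (τ p))
    (p q : Polynomial F) (hq : q ≠ 0)
    (f : RatFunc F)
    (hf : f = algebraMap (Polynomial F) (RatFunc F) p /
              algebraMap (Polynomial F) (RatFunc F) q)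
    (hsr : ∀ i : ℤ, IsCoprime p ((τ ^ i) q))
    (r : RatFunc F) (hr : r ≠ 0) (heq : f = σ r / r) :
    (∃ c : F, r = RatFunc.C c) ∧ f = 1 := by
  have hshift (u : F[X]) : τ u = u.comp (X + 1) := by
    simpa using zpow_apply_eq_comp_X_add_C hτ 1 u
  have hsep (i : ℤ) : IsCoprime p (q.comp (X + C (i : F))) := by
    simpa only [zpow_apply_eq_comp_X_add_C hτ] using hsr i
  have hrel := RatFunc.mul_num_mul_eq_of_div_eq_map_div τ σ hcompat hq hr (hf ▸ heq)
  rw [hshift, hshift] at hrel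
  obtain ⟨c, rfl⟩ := RatFunc.exists_eq_C_of_natDegree_num_denom_eq_zero
    (natDegree_eq_zero_of_mul_comp_X_add_one_eq r.isCoprime_num_denom.symm
      (RatFunc.num_ne_zero hr) hrel.symm (isCoprime_comp_X_add_C_comm hsep))
    (natDegree_eq_zero_of_mul_comp_X_add_one_eq r.isCoprime_num_denom r.denom_ne_zero hrel hsep)
  refine ⟨⟨c, rfl⟩, ?_⟩
  rw [heq, ← RatFunc.algebraMap_eq_C, σ.commutes, div_self (by rwa [RatFunc.algebraMap_eq_C])]

/-- **Lemma (shift-reduced, multiplicative telescoper is trivial).**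
If `f = p/q ∈ F(k)` is shift-reduced and `f = σ(r)/r` for some nonzero
rational function `r`, then `r` is a constant and `f = 1`. -/
theorem shift_reduced_sigma_quotient_eq_one
    (F : Type*) [Field F] [CharZero F]
    (τ : Polynomial F ≃ₐ[F] Polynomial F) (hτ : τ X = X + 1)
    (σ : RatFunc F ≃ₐ[F] RatFunc F)
    (hcompat : ∀ p : Polynomial F,
      σ (algebraMap (Polynomial F) (RatFunc F) p) =
        algebraMap (Polynomial F) (RatFunc F) (τ p))
    (p q : Polynomial F) (hq : q ≠ 0) (hpq : IsCoprime p q)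
    (f : RatFunc F)
    (hf : f = algebraMap (Polynomial F) (RatFunc F) p /
              algebraMap (Polynomial F) (RatFunc F) q)
    (hsr : ∀ i : ℤ, IsCoprime p ((τ ^ i) q))
    (r : RatFunc F) (hr : r ≠ 0) (heq : f = σ r / r) :
    (∃ c : F, r = RatFunc.C c) ∧ f = 1 :=
  shift_reduced_sigma_quotient_eq_one_general F τ hτ σ hcompat p q hq f hf hsr r hr heq
end

section
/- Let F be a field of characteristic zero and σ the shift automorphism of F(k). If f ∈ F(k) is shift-reduced, f ≠ 1, and r ∈ F[k] is a polynomial satisfying f·σ(r) − r = 0, then r = 0. -/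
/-! Writing `f = p / q`, the equation reads `p · r(k+1) = q · r(k)`. Telescoping gives
`p(k) p(k+1) ⋯ p(k+n-1) · r(k+n) = q(k) q(k+1) ⋯ q(k+n-1) · r(k)`, and since `p` is coprime to
every shift of `q`, the product of the first `n` shifts of `p` divides `r` for every `n`; so `p`
is constant. The shift preserves degree and leading coefficient, so comparing them on both sides
of `p · r(k+1) = q · r(k)` gives `q = p`, that is `f = 1`. -/

open Polynomial Finset

section ShiftEquation

variable {R A : Type*} [CommSemiring R] [CommSemiring A] [Algebra R A]

theorem isCoprime_pow_apply_of_forall_isCoprime {τ : A ≃ₐ[R] A} {p q : A}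
    (hcop : ∀ i : ℤ, IsCoprime p ((τ ^ i) q)) (i j : ℤ) :
    IsCoprime ((τ ^ i) p) ((τ ^ j) q) := by
  have h := (hcop (j - i)).map ((τ ^ i : A ≃ₐ[R] A) : A →+* A)
  rwa [RingHom.coe_coe, ← AlgEquiv.mul_apply, ← zpow_add, add_sub_cancel] at h

theorem prod_pow_apply_mul_pow_apply_eq {τ : A ≃ₐ[R] A} {p q r : A} (h : p * τ r = q * r)
    (n : ℕ) :
    (∏ i ∈ range n, (τ ^ i) p) * (τ ^ n) r = (∏ i ∈ range n, (τ ^ i) q) * r := by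
  induction n with
  | zero => simp
  | succ n ih =>
    have hshift : (τ ^ n) p * (τ ^ (n + 1)) r = (τ ^ n) q * (τ ^ n) r := by
      rw [pow_succ, AlgEquiv.mul_apply, ← map_mul, h, map_mul]
    calc (∏ i ∈ range (n + 1), (τ ^ i) p) * (τ ^ (n + 1)) r
        = (∏ i ∈ range n, (τ ^ i) p) * ((τ ^ n) p * (τ ^ (n + 1)) r) := by
          rw [prod_range_succ, mul_assoc]
      _ = (τ ^ n) q * ((∏ i ∈ range n, (τ ^ i) p) * (τ ^ n) r) := by
          rw [hshift, mul_left_comm]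
      _ = (∏ i ∈ range (n + 1), (τ ^ i) q) * r := by
          rw [ih, prod_range_succ, mul_left_comm, mul_assoc]

theorem prod_pow_apply_dvd_of_mul_apply_eq {τ : A ≃ₐ[R] A} {p q r : A}
    (hcop : ∀ i : ℤ, IsCoprime p ((τ ^ i) q)) (h : p * τ r = q * r) (n : ℕ) :
    ∏ i ∈ range n, (τ ^ i) p ∣ r := by
  have hprod : IsCoprime (∏ i ∈ range n, (τ ^ i) p) (∏ i ∈ range n, (τ ^ i) q) :=
    IsCoprime.prod_left fun i _ => IsCoprime.prod_right fun j _ => by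
      simpa only [zpow_natCast] using isCoprime_pow_apply_of_forall_isCoprime hcop i j
  exact hprod.dvd_of_dvd_mul_left ⟨_, (prod_pow_apply_mul_pow_apply_eq h n).symm⟩

end ShiftEquation

namespace Polynomial

variable {R : Type*} [CommRing R]

theorem taylorEquiv_apply (c : R) (s : R[X]) : taylorEquiv c s = taylor c s := rfl

theorem eq_taylorEquiv_of_apply_X {τ : R[X] ≃ₐ[R] R[X]} {c : R} (hτ : τ X = X + C c) :
    τ = taylorEquiv c :=
  AlgEquiv.coe_toAlgHom_injective <| algHom_ext <| by simpa [taylor_apply] using hτ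

theorem natDegree_taylorEquiv_pow_apply (c : R) (n : ℕ) (s : R[X]) :
    ((taylorEquiv c ^ n) s).natDegree = s.natDegree := by
  induction n with
  | zero => rfl
  | succ n ih => rw [pow_succ', AlgEquiv.mul_apply, taylorEquiv_apply, natDegree_taylor, ih]

variable [IsDomain R]

theorem natDegree_eq_zero_of_mul_taylor_eq {c : R} {p q r : R[X]}
    (hcop : ∀ i : ℤ, IsCoprime p ((taylorEquiv c ^ i) q)) (h : p * taylor c r = q * r)
    (hr : r ≠ 0) : p.natDegree = 0 := by
  by_cases hp : p = 0
  · rw [hp, natDegree_zero]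
  set N := r.natDegree + 1
  have hdvd := prod_pow_apply_dvd_of_mul_apply_eq hcop h N
  have hdeg : (∏ i ∈ range N, (taylorEquiv c ^ i) p).natDegree = N * p.natDegree := by
    rw [natDegree_prod _ _ fun i _ => (map_ne_zero_iff _ (AlgEquiv.injective _)).2 hp]
    simp only [natDegree_taylorEquiv_pow_apply, sum_const, card_range, smul_eq_mul]
  have hle : N * p.natDegree ≤ r.natDegree := hdeg ▸ natDegree_le_of_dvd hdvd hr
  by_contra hp0
  have := Nat.le_mul_of_pos_right N (Nat.pos_of_ne_zero hp0)
  omega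

theorem eq_of_mul_taylor_eq {c : R} {p q r : R[X]} (hp : p.natDegree = 0)
    (h : p * taylor c r = q * r) (hr : r ≠ 0) : p = q := by
  have hlc : p.leadingCoeff = q.leadingCoeff :=
    mul_right_cancel₀ (leadingCoeff_ne_zero.2 hr) <| by
      simpa only [leadingCoeff_mul, leadingCoeff_taylor] using congr_arg leadingCoeff h
  by_cases hp0 : p = 0
  · rw [hp0, leadingCoeff_zero, eq_comm, leadingCoeff_eq_zero] at hlc
    rw [hp0, hlc]
  have hq0 : q ≠ 0 := by
    rwa [← leadingCoeff_ne_zero, ← hlc, leadingCoeff_ne_zero]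
  have hq : q.natDegree = 0 := by
    have := congr_arg natDegree h
    rw [natDegree_mul hp0 (by rwa [← taylorEquiv_apply, map_ne_zero_iff _ (AlgEquiv.injective _)]),
      natDegree_mul hq0 hr, natDegree_taylor] at this
    omega
  rw [leadingCoeff, leadingCoeff, hp, hq] at hlc
  rw [eq_C_of_natDegree_eq_zero hp, eq_C_of_natDegree_eq_zero hq, hlc]

end Polynomial

theorem shift_reduced_poly_solution_eq_zero_general
    (F : Type*) [Field F]
    (τ : Polynomial F ≃ₐ[F] Polynomial F) (hτ : τ X = X + 1)
    (σ : RatFunc F ≃ₐ[F] RatFunc F)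
    (hcompat : ∀ p : Polynomial F,
      σ (algebraMap (Polynomial F) (RatFunc F) p) =
        algebraMap (Polynomial F) (RatFunc F) (τ p))
    (p q : Polynomial F) (hq : q ≠ 0)
    (f : RatFunc F)
    (hf : f = algebraMap (Polynomial F) (RatFunc F) p /
              algebraMap (Polynomial F) (RatFunc F) q)
    (hsr : ∀ i : ℤ, IsCoprime p ((τ ^ i) q))
    (hf1 : f ≠ 1)
    (r : Polynomial F)
    (heq : f * σ (algebraMap (Polynomial F) (RatFunc F) r) -
             algebraMap (Polynomial F) (RatFunc F) r = 0) :
    r = 0 := by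
  obtain rfl : τ = taylorEquiv 1 := eq_taylorEquiv_of_apply_X (by rw [hτ, C_1])
  by_contra hr
  have hAq : algebraMap F[X] (RatFunc F) q ≠ 0 :=
    (map_ne_zero_iff _ (RatFunc.algebraMap_injective F)).2 hq
  have key : p * taylor 1 r = q * r := by
    apply RatFunc.algebraMap_injective F
    rw [hf, sub_eq_zero, hcompat, div_mul_eq_mul_div, div_eq_iff hAq] at heq
    simpa only [map_mul, mul_comm, taylorEquiv_apply] using heq
  have hpq := eq_of_mul_taylor_eq (natDegree_eq_zero_of_mul_taylor_eq hsr key hr) key hr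
  exact hf1 (by rw [hf, hpq, div_self hAq])

/-- **Lemma.** If `f ∈ F(k)` is shift-reduced, `f ≠ 1`, and a polynomial `r`
satisfies `f·σ(r) − r = 0`, then `r = 0`. -/
theorem shift_reduced_poly_solution_eq_zero
    (F : Type*) [Field F] [CharZero F]
    (τ : Polynomial F ≃ₐ[F] Polynomial F) (hτ : τ X = X + 1)
    (σ : RatFunc F ≃ₐ[F] RatFunc F)
    (hcompat : ∀ p : Polynomial F,
      σ (algebraMap (Polynomial F) (RatFunc F) p) =
        algebraMap (Polynomial F) (RatFunc F) (τ p))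
    (p q : Polynomial F) (hq : q ≠ 0) (hpq : IsCoprime p q)
    (f : RatFunc F)
    (hf : f = algebraMap (Polynomial F) (RatFunc F) p /
              algebraMap (Polynomial F) (RatFunc F) q)
    (hsr : ∀ i : ℤ, IsCoprime p ((τ ^ i) q))
    (hf1 : f ≠ 1)
    (r : Polynomial F)
    (heq : f * σ (algebraMap (Polynomial F) (RatFunc F) r) -
             algebraMap (Polynomial F) (RatFunc F) r = 0) :
    r = 0 :=
  shift_reduced_poly_solution_eq_zero_general F τ hτ σ hcompat p q hq f hf hsr hf1 r heq
end

section
/- Let F be a field of characteristic zero, σ the shift on F(k), and let f = p/q ∈ F(k) with p, q ∈ F[k] coprime, deg(p) < deg(q), and q shift-free (i.e., gcd(q, σ^i(q)) = 1 for all nonzero integers i). If there exists a rational function r ∈ F(k) with f = σ(r) − r, then f = 0. -/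
/-!
Every shift `σ^i f` has denominator `τ^i q` (up to a unit), and these are pairwise coprime
because `q` is shift-free. Hence the denominator of `∑_{i<n} σ^i f` has degree `n · deg q`.
If `f = σ r - r`, that sum telescopes to `σ^n r - r`, whose denominator has degree at most
`2 · deg (denom r)`. Since `deg p < deg q`, a nonzero `f` forces `deg q ≥ 1`, and `n` large
gives a contradiction.
-/

open Polynomial

namespace RatFunc

variable {K : Type*} [Field K]

theorem denom_sub_dvd (x y : RatFunc K) : denom (x - y) ∣ denom x * denom y := by
  rw [denom_dvd (mul_ne_zero (denom_ne_zero x) (denom_ne_zero y))]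
  refine ⟨x.num * y.denom - x.denom * y.num, ?_⟩
  rw [map_mul, map_sub, map_mul, map_mul, ← div_sub_div _ _
    (algebraMap_ne_zero (denom_ne_zero x)) (algebraMap_ne_zero (denom_ne_zero y)),
    num_div_denom, num_div_denom]

theorem natDegree_denom_sub_le (x y : RatFunc K) :
    (x - y).denom.natDegree ≤ x.denom.natDegree + y.denom.natDegree := by
  rw [← natDegree_mul (denom_ne_zero x) (denom_ne_zero y)]
  exact natDegree_le_of_dvd (denom_sub_dvd x y) (mul_ne_zero (denom_ne_zero x) (denom_ne_zero y))

theorem denom_sum_dvd {ι : Type*} (s : Finset ι) (x : ι → RatFunc K) :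
    denom (∑ i ∈ s, x i) ∣ ∏ i ∈ s, denom (x i) := by
  classical
  induction s using Finset.induction_on with
  | empty => simp
  | insert a s ha ih =>
    rw [Finset.sum_insert ha, Finset.prod_insert ha]
    exact (denom_add_dvd _ _).trans (mul_dvd_mul_left _ ih)

theorem prod_denom_dvd_denom_sum {ι : Type*} (s : Finset ι) (x : ι → RatFunc K)
    (hx : (s : Set ι).Pairwise fun i j ↦ IsCoprime (x i).denom (x j).denom) :
    ∏ i ∈ s, denom (x i) ∣ denom (∑ i ∈ s, x i) := by
  classical
  refine Finset.prod_dvd_of_coprime hx fun i hi ↦ ?_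
  have hsplit : x i = ∑ j ∈ s, x j - ∑ j ∈ s.erase i, x j := by
    rw [← Finset.add_sum_erase s x hi, add_sub_cancel_right]
  have hcop : IsCoprime (denom (x i)) (denom (∑ j ∈ s.erase i, x j)) :=
    (IsCoprime.prod_right fun j hj ↦ hx hi (Finset.mem_of_mem_erase hj)
      (Finset.ne_of_mem_erase hj).symm).of_isCoprime_of_dvd_right (denom_sum_dvd _ x)
  refine hcop.dvd_of_dvd_mul_right ?_
  conv_lhs => rw [hsplit]
  exact denom_sub_dvd _ _

theorem associated_denom_div {a b : K[X]} (hab : IsCoprime a b) (hb : b ≠ 0) :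
    Associated (denom (algebraMap K[X] (RatFunc K) a / algebraMap K[X] (RatFunc K) b)) b := by
  refine associated_of_dvd_dvd (denom_div_dvd a b) (hab.symm.dvd_of_dvd_mul_left ?_)
  set x := algebraMap K[X] (RatFunc K) a / algebraMap K[X] (RatFunc K) b
  have h : x.num * b = a * x.denom := (num_mul_eq_mul_denom_iff hb).mpr rfl
  exact ⟨x.num, by rw [← h, mul_comm]⟩

end RatFunc

theorem isCoprime_pow_apply_of_ne {R A : Type*} [CommSemiring R] [CommSemiring A]
    [Algebra R A] {τ : A ≃ₐ[R] A} {q : A} (hsf : ∀ i : ℤ, i ≠ 0 → IsCoprime q ((τ ^ i) q))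
    {i j : ℕ} (hij : i ≠ j) : IsCoprime ((τ ^ i) q) ((τ ^ j) q) := by
  have h := (hsf ((j : ℤ) - i) (sub_ne_zero.mpr (by exact_mod_cast hij.symm))).map
    ((τ ^ i : A ≃ₐ[R] A) : A →+* A)
  rwa [RingHom.coe_coe, ← AlgEquiv.mul_apply, ← zpow_natCast, ← zpow_add, add_sub_cancel,
    zpow_natCast] at h

section Shift

variable {F : Type*} [Field F]

def RestrictsTo (σ : RatFunc F ≃ₐ[F] RatFunc F) (τ : F[X] ≃ₐ[F] F[X]) : Prop :=
  ∀ p : F[X], σ (algebraMap F[X] (RatFunc F) p) = algebraMap F[X] (RatFunc F) (τ p)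

variable {τ : F[X] ≃ₐ[F] F[X]} {σ : RatFunc F ≃ₐ[F] RatFunc F}

theorem natDegree_pow_apply (hτ : τ X = X + 1) (n : ℕ) (a : F[X]) :
    ((τ ^ n) a).natDegree = a.natDegree := by
  have hcomp (b : F[X]) : τ b = b.comp (τ X) := by
    rw [comp_eq_aeval, aeval_algHom_apply, aeval_X_left_apply]
  induction n with
  | zero => rfl
  | succ n ih => rw [pow_succ', AlgEquiv.mul_apply, hcomp, natDegree_comp, hτ, ← C_1,
      natDegree_X_add_C, mul_one, ih]

namespace RestrictsTo

theorem pow (h : RestrictsTo σ τ) (n : ℕ) : RestrictsTo (σ ^ n) (τ ^ n) := by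
  induction n with
  | zero => intro p; rfl
  | succ n ih =>
    intro p
    rw [pow_succ, pow_succ, AlgEquiv.mul_apply, AlgEquiv.mul_apply, h, ih]

theorem denom_apply_dvd (h : RestrictsTo σ τ) (x : RatFunc F) : (σ x).denom ∣ τ x.denom := by
  rw [RatFunc.denom_dvd (by simpa using x.denom_ne_zero)]
  exact ⟨τ x.num, by rw [← h, ← h, ← map_div₀, RatFunc.num_div_denom]⟩

theorem associated_denom_apply_div (h : RestrictsTo σ τ) {a b : F[X]} (hab : IsCoprime a b)
    (hb : b ≠ 0) : Associated
      (σ (algebraMap F[X] (RatFunc F) a / algebraMap F[X] (RatFunc F) b)).denom (τ b) := by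
  rw [map_div₀, h, h]
  exact RatFunc.associated_denom_div (hab.map (τ : F[X] →+* F[X])) (by simpa using hb)

theorem natDegree_denom_sum_pow_apply_sub_le (h : RestrictsTo σ τ) (hτ : τ X = X + 1)
    (r : RatFunc F) (n : ℕ) :
    (∑ i ∈ Finset.range n, (σ ^ i) (σ r - r)).denom.natDegree ≤ 2 * r.denom.natDegree := by
  have htel : ∑ i ∈ Finset.range n, (σ ^ i) (σ r - r) = (σ ^ n) r - r := by
    simp_rw [map_sub, ← AlgEquiv.mul_apply, ← pow_succ]
    exact Finset.sum_range_sub (fun i ↦ (σ ^ i) r) n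
  have hshift : ((σ ^ n) r).denom.natDegree ≤ r.denom.natDegree := by
    calc ((σ ^ n) r).denom.natDegree ≤ ((τ ^ n) r.denom).natDegree :=
          natDegree_le_of_dvd ((h.pow n).denom_apply_dvd r)
            (EmbeddingLike.map_ne_zero_iff.mpr r.denom_ne_zero)
      _ = r.denom.natDegree := natDegree_pow_apply hτ n _
  rw [htel]
  linarith [RatFunc.natDegree_denom_sub_le ((σ ^ n) r) r]

theorem mul_natDegree_le_natDegree_denom_sum_pow_apply (h : RestrictsTo σ τ)
    (hτ : τ X = X + 1) {p q : F[X]} (hq : q ≠ 0) (hpq : IsCoprime p q)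
    (hsf : ∀ i : ℤ, i ≠ 0 → IsCoprime q ((τ ^ i) q)) (n : ℕ) :
    n * q.natDegree ≤ (∑ i ∈ Finset.range n, (σ ^ i)
      (algebraMap F[X] (RatFunc F) p / algebraMap F[X] (RatFunc F) q)).denom.natDegree := by
  set x := fun i : ℕ ↦ (σ ^ i) (algebraMap F[X] (RatFunc F) p / algebraMap F[X] (RatFunc F) q)
  have hx (i : ℕ) : Associated (x i).denom ((τ ^ i) q) :=
    (h.pow i).associated_denom_apply_div hpq hq
  have hdvd := RatFunc.prod_denom_dvd_denom_sum (Finset.range n) x fun i _ j _ hij ↦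
    ((isCoprime_pow_apply_of_ne hsf hij).of_isCoprime_of_dvd_left
      (hx i).dvd).of_isCoprime_of_dvd_right (hx j).dvd
  calc n * q.natDegree = ∑ i ∈ Finset.range n, (x i).denom.natDegree := by
        simp only [natDegree_eq_of_degree_eq (degree_eq_degree_of_associated (hx _)),
          natDegree_pow_apply hτ, Finset.sum_const, Finset.card_range, smul_eq_mul]
    _ = (∏ i ∈ Finset.range n, (x i).denom).natDegree :=
        (natDegree_prod _ _ fun i _ ↦ (x i).denom_ne_zero).symm
    _ ≤ _ := natDegree_le_of_dvd hdvd (RatFunc.denom_ne_zero _)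

end RestrictsTo

end Shift

theorem shift_free_proper_summable_eq_zero_general
    (F : Type*) [Field F]
    (τ : Polynomial F ≃ₐ[F] Polynomial F) (hτ : τ X = X + 1)
    (σ : RatFunc F ≃ₐ[F] RatFunc F)
    (hcompat : ∀ p : Polynomial F,
      σ (algebraMap (Polynomial F) (RatFunc F) p) =
        algebraMap (Polynomial F) (RatFunc F) (τ p))
    (p q : Polynomial F) (hq : q ≠ 0) (hpq : IsCoprime p q)
    (hdeg : p.degree < q.degree)
    (hsf : ∀ i : ℤ, i ≠ 0 → IsCoprime q ((τ ^ i) q))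
    (f : RatFunc F)
    (hf : f = algebraMap (Polynomial F) (RatFunc F) p /
              algebraMap (Polynomial F) (RatFunc F) q)
    (r : RatFunc F) (heq : f = σ r - r) :
    f = 0 := by
  by_contra hf0
  have hp : p ≠ 0 := by
    rintro rfl
    simp [hf] at hf0
  have hq1 : 0 < q.natDegree :=
    natDegree_pos_iff_degree_pos.mpr ((zero_le_degree_iff.mpr hp).trans_lt hdeg)
  have hσ : RestrictsTo σ τ := hcompat
  set n := 2 * r.denom.natDegree + 1
  have hlower := hσ.mul_natDegree_le_natDegree_denom_sum_pow_apply hτ hq hpq hsf n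
  have hupper := hσ.natDegree_denom_sum_pow_apply_sub_le hτ r n
  rw [← hf, heq] at hlower
  have := Nat.le_mul_of_pos_right n hq1
  omega

/-- **Lemma (rational summability).** If `f = p/q` with `p, q` coprime,
`deg p < deg q`, `q` shift-free, and `f = σ(r) − r` for some rational
function `r`, then `f = 0`. -/
theorem shift_free_proper_summable_eq_zero
    (F : Type*) [Field F] [CharZero F]
    (τ : Polynomial F ≃ₐ[F] Polynomial F) (hτ : τ X = X + 1)
    (σ : RatFunc F ≃ₐ[F] RatFunc F)
    (hcompat : ∀ p : Polynomial F,
      σ (algebraMap (Polynomial F) (RatFunc F) p) =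
        algebraMap (Polynomial F) (RatFunc F) (τ p))
    (p q : Polynomial F) (hq : q ≠ 0) (hpq : IsCoprime p q)
    (hdeg : p.degree < q.degree)
    (hsf : ∀ i : ℤ, i ≠ 0 → IsCoprime q ((τ ^ i) q))
    (f : RatFunc F)
    (hf : f = algebraMap (Polynomial F) (RatFunc F) p /
              algebraMap (Polynomial F) (RatFunc F) q)
    (r : RatFunc F) (heq : f = σ r - r) :
    f = 0 :=
  shift_free_proper_summable_eq_zero_general F τ hτ σ hcompat p q hq hpq hdeg hsf f hf r heq
end

section
/- Let K = u/v be a shift-reduced rational function in F(k) with u, v ∈ F[k] coprime, and let φ_K: F[k] → F[k] be the F-linear map p ↦ u·σ(p) − v·p. Define W_K as the F-span of those monomials k^ℓ whose degree ℓ is not the degree of any nonzero element of the image of φ_K. Then F[k] = im(φ_K) ⊕ W_K as F-vector spaces. -/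
open Polynomial


lemma support_subset_of_mem_span_pow {F : Type*} [Field F] (S : Set ℕ) (x : Polynomial F)
    (hx : x ∈ Submodule.span F {g : Polynomial F | ∃ ℓ ∈ S, g = X ^ ℓ}) :
    ↑x.support ⊆ S := by
  induction hx using Submodule.span_induction with
  | mem g hg =>
      obtain ⟨ℓ, hℓ, rfl⟩ := hg
      simp [Polynomial.support_X_pow, hℓ]
  | zero => simp
  | add a b _ _ ha hb =>
      intro i hi
      have hi' : i ∈ a.support ∪ b.support :=
        Polynomial.support_add (by exact_mod_cast hi)
      rcases Finset.mem_union.mp hi' with h | h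
      · exact ha (by exact_mod_cast h)
      · exact hb (by exact_mod_cast h)
  | smul c a _ ha =>
      intro i hi
      exact ha (by exact_mod_cast Polynomial.support_smul c a (by exact_mod_cast hi))

lemma aux_compl (F : Type*) [Field F] (V : Submodule F (Polynomial F)) :
    IsCompl V (Submodule.span F {g : Polynomial F | ∃ ℓ : ℕ,
      g = X ^ ℓ ∧ ∀ p ∈ V, p ≠ 0 → p.degree ≠ (ℓ : WithBot ℕ)}) := by
  set S : Set ℕ := {ℓ | ∀ p ∈ V, p ≠ 0 → p.degree ≠ (ℓ : WithBot ℕ)} with hS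
  have hset : {g : Polynomial F | ∃ ℓ : ℕ,
      g = X ^ ℓ ∧ ∀ p ∈ V, p ≠ 0 → p.degree ≠ (ℓ : WithBot ℕ)}
      = {g : Polynomial F | ∃ ℓ ∈ S, g = X ^ ℓ} := by
    ext g; constructor
    · rintro ⟨ℓ, rfl, h⟩; exact ⟨ℓ, h, rfl⟩
    · rintro ⟨ℓ, h, rfl⟩; exact ⟨ℓ, rfl, h⟩
  rw [hset]
  constructor
  · -- disjoint
    rw [Submodule.disjoint_def]
    intro x hxV hxW
    by_contra hx0
    have hsupp := support_subset_of_mem_span_pow S x hxW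
    have hmem : x.natDegree ∈ x.support := Polynomial.natDegree_mem_support_of_nonzero hx0
    have : x.natDegree ∈ S := hsupp hmem
    exact this x hxV hx0 (Polynomial.degree_eq_natDegree hx0)
  · -- codisjoint
    rw [codisjoint_iff, eq_top_iff]
    intro p _
    have key : ∀ n : ℕ, ∀ p : Polynomial F, p.degree < (n : WithBot ℕ) →
        p ∈ V ⊔ Submodule.span F {g : Polynomial F | ∃ ℓ ∈ S, g = X ^ ℓ} := by
      intro n
      induction n with
      | zero =>
          intro p hp
          have hp' : p.degree < 0 := by exact_mod_cast hp
          have : p = 0 := Polynomial.degree_eq_bot.mp (Nat.WithBot.lt_zero_iff.mp hp')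
          simp [this]
      | succ n IH =>
          intro p hp
          by_cases hp0 : p = 0
          · simp [hp0]
          · have hdeg : p.degree = (p.natDegree : WithBot ℕ) := Polynomial.degree_eq_natDegree hp0
            rw [hdeg] at hp
            have hlt : p.natDegree < n + 1 := by exact_mod_cast hp
            have hle : (p.natDegree : WithBot ℕ) ≤ (n : WithBot ℕ) := by
              exact_mod_cast Nat.lt_succ_iff.mp hlt
            by_cases hm : p.natDegree ∈ S
            · -- subtract leading monomial, which lies in W
              have hXm : (X : Polynomial F) ^ p.natDegree ∈
                  Submodule.span F {g : Polynomial F | ∃ ℓ ∈ S, g = X ^ ℓ} :=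
                Submodule.subset_span ⟨p.natDegree, hm, rfl⟩
              have hW : (C p.leadingCoeff * X ^ p.natDegree) ∈
                  Submodule.span F {g : Polynomial F | ∃ ℓ ∈ S, g = X ^ ℓ} := by
                rw [← smul_eq_C_mul]
                exact Submodule.smul_mem _ _ hXm
              have herase : p.eraseLead ∈ V ⊔ _ := IH p.eraseLead
                (lt_of_lt_of_le (hdeg ▸ Polynomial.degree_eraseLead_lt hp0) hle)
              have := Submodule.add_mem _ herase (Submodule.mem_sup_right hW)
              rwa [Polynomial.eraseLead_add_C_mul_X_pow] at this
            · -- subtract a multiple of an element of V of the same degree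
              rw [hS, Set.mem_setOf_eq] at hm
              push_neg at hm
              obtain ⟨q, hqV, hq0, hqdeg⟩ := hm
              have hqlc : q.leadingCoeff ≠ 0 := Polynomial.leadingCoeff_ne_zero.mpr hq0
              have hplc : p.leadingCoeff ≠ 0 := Polynomial.leadingCoeff_ne_zero.mpr hp0
              set c : F := p.leadingCoeff / q.leadingCoeff with hc
              have hc0 : c ≠ 0 := div_ne_zero hplc hqlc
              have hdeq : p.degree = (C c * q).degree := by
                rw [Polynomial.degree_C_mul hc0, hqdeg, hdeg]
              have hlc : p.leadingCoeff = (C c * q).leadingCoeff := by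
                rw [Polynomial.leadingCoeff_mul, Polynomial.leadingCoeff_C, hc,
                  div_mul_cancel₀ _ hqlc]
              have hsub : (p - C c * q).degree < (n : WithBot ℕ) :=
                lt_of_lt_of_le (hdeg ▸ Polynomial.degree_sub_lt hdeq hp0 hlc) hle
              have hmemV : C c * q ∈ V := by
                rw [← smul_eq_C_mul]; exact Submodule.smul_mem _ _ hqV
              have := Submodule.add_mem _ (IH _ hsub) (Submodule.mem_sup_left hmemV)
              rwa [sub_add_cancel] at this
    exact key (p.natDegree + 1) p
      (lt_of_le_of_lt Polynomial.degree_le_natDegree (by exact_mod_cast Nat.lt_succ_self _))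

/-- **Lemma (polynomial reduction decomposition).** For a shift-reduced
`K = u/v`, with `φ_K(p) = u·σ(p) − v·p`, the polynomial ring decomposes
as `F[k] = im(φ_K) ⊕ W_K`, where `W_K` is the span of the monomials whose
degree is not attained by any nonzero element of `im(φ_K)`. -/
theorem polynomial_reduction_direct_sum
    (F : Type*) [Field F] [CharZero F]
    (τ : Polynomial F ≃ₐ[F] Polynomial F) (hτ : τ X = X + 1)
    (u v : Polynomial F) (hu : u ≠ 0) (hv : v ≠ 0) (huv : IsCoprime u v)
    (hsr : ∀ i : ℤ, IsCoprime u ((τ ^ i) v)) :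
    IsCompl
      (Submodule.span F (Set.range fun p : Polynomial F => u * τ p - v * p))
      (Submodule.span F {g : Polynomial F | ∃ ℓ : ℕ, g = X ^ ℓ ∧
        ∀ p : Polynomial F, u * τ p - v * p ≠ 0 →
          (u * τ p - v * p).degree ≠ (ℓ : WithBot ℕ)}) := by
  set f : Polynomial F →ₗ[F] Polynomial F :=
    { toFun := fun p => u * τ p - v * p
      map_add' := fun p q => by simp [map_add]; ring
      map_smul' := fun c p => by simp [map_smul, smul_sub, mul_smul_comm] }
    with hf
  have hfapp : ∀ p, f p = u * τ p - v * p := fun p => rfl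
  have h1 : Submodule.span F (Set.range fun p : Polynomial F => u * τ p - v * p)
      = LinearMap.range f := by
    rw [show (Set.range fun p : Polynomial F => u * τ p - v * p) = Set.range f from rfl,
      ← LinearMap.coe_range, Submodule.span_eq]
  have h2 : {g : Polynomial F | ∃ ℓ : ℕ, g = X ^ ℓ ∧
        ∀ p : Polynomial F, u * τ p - v * p ≠ 0 →
          (u * τ p - v * p).degree ≠ (ℓ : WithBot ℕ)}
      = {g : Polynomial F | ∃ ℓ : ℕ, g = X ^ ℓ ∧
        ∀ q ∈ LinearMap.range f, q ≠ 0 → q.degree ≠ (ℓ : WithBot ℕ)} := by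
    ext g
    simp only [Set.mem_setOf_eq]
    refine exists_congr fun ℓ => and_congr_right fun _ => ?_
    constructor
    · rintro h q ⟨p, rfl⟩ hq0
      exact h p hq0
    · intro h p hp0
      exact h (u * τ p - v * p) ⟨p, rfl⟩ hp0
  rw [h1, h2]
  exact aux_compl F (LinearMap.range f)
end

section
/- Let K = u/v ∈ F(k) be shift-reduced with u, v ∈ F[k] coprime, and let α₁ = deg(u), α₂ = deg(v), β = max{0, deg(v − u)}. Then the standard complement W_K (the complement of im(φ_K) in F[k] spanned by monomials of degrees not attained by im(φ_K)) has F-dimension at most max{α₁, α₂} − [β ≤ α₁ − 1], where [·] is the Iverson bracket. -/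
/-!
With `σ = taylor 1` the bound is a dimension count. If `u ≠ v`, then `φ_K` is injective:
a nonzero `p` in the kernel forces `deg u = deg v` and `lc u = lc v`, hence `deg u > 0`;
coprimality then gives `u ∣ p`, and `p = u q` solves the same equation with `σ u` in place of `u`
at smaller degree. So `φ_K` embeds the `n`-dimensional space of polynomials of degree `< n`
into polynomials of degree `< n + c`, where `c = max(α₁, α₂)`, or `c = α₁ − 1` when `β < α₁`
(write `φ_K(p) = u (σ p − p) − (v − u) p`). Elements of the image are already separated by
their coefficients at the non-missed degrees, so at most `c` degrees are missed. If `u = v`,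
then `u` is a unit and `φ_K(X^(ℓ+1))` has degree exactly `ℓ` in characteristic zero.
-/

open Polynomial

namespace Polynomial

section DegreeLT

variable {R : Type*} [CommRing R] {n : ℕ} {p : R[X]}

lemma mul_mem_degreeLT (w : R[X]) (hp : p ∈ degreeLT R n) :
    w * p ∈ degreeLT R (n + w.natDegree) := by
  rcases eq_or_ne p 0 with rfl | hp0
  · simp
  rw [mem_degreeLT, degree_eq_natDegree hp0, Nat.cast_lt] at hp
  rw [mem_degreeLT]
  refine degree_le_natDegree.trans_lt ?_
  exact_mod_cast natDegree_mul_le.trans_lt (by omega)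

lemma taylor_sub_mem_degreeLT (r : R) (hp : p ∈ degreeLT R (n + 1)) :
    taylor r p - p ∈ degreeLT R n := by
  rcases eq_or_ne p 0 with rfl | hp0
  · simp
  rw [degreeLT_succ_eq_degreeLE, mem_degreeLE] at hp
  rw [mem_degreeLT]
  calc (taylor r p - p).degree < (taylor r p).degree :=
        degree_sub_lt_left (degree_taylor p r) (mt (taylor_eq_zero r p).mp hp0)
          (leadingCoeff_taylor r p)
    _ = p.degree := degree_taylor p r
    _ ≤ n := hp

end DegreeLT

lemma degree_taylor_one_X_pow_succ_sub {F : Type*} [Field F] [CharZero F] (ℓ : ℕ) :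
    (taylor 1 (X ^ (ℓ + 1)) - X ^ (ℓ + 1) : F[X]).degree = ℓ := by
  refine le_antisymm ?_ (le_degree_of_ne_zero ?_)
  · have hX : (X ^ (ℓ + 1) : F[X]) ∈ degreeLT F (ℓ + 1 + 1) := by
      rw [mem_degreeLT, degree_X_pow]
      exact_mod_cast Nat.lt_succ_self _
    have h := taylor_sub_mem_degreeLT 1 hX
    rwa [degreeLT_succ_eq_degreeLE, mem_degreeLE] at h
  · rw [coeff_sub, taylor_X_pow, C_1, coeff_X_add_one_pow, coeff_X_pow]
    simpa using Nat.cast_add_one_ne_zero ℓ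

lemma eq_taylorEquiv_one_of_apply_X {F : Type*} [Field F] {τ : F[X] ≃ₐ[F] F[X]}
    (hτ : τ X = X + 1) : τ = taylorEquiv 1 := by
  refine AlgEquiv.coe_toAlgHom_injective (algHom_ext ?_)
  simp [hτ]

end Polynomial

theorem isCoprime_apply_of_forall_isCoprime_zpow_apply {R A : Type*} [CommSemiring R]
    [CommSemiring A] [Algebra R A] (σ : A ≃ₐ[R] A) {w v : A}
    (h : ∀ i : ℤ, IsCoprime w ((σ ^ i) v)) (i : ℤ) : IsCoprime (σ w) ((σ ^ i) v) := by
  have hσ : σ ^ i = σ * σ ^ (i - 1) := by rw [← zpow_one_add, add_sub_cancel]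
  simpa [hσ] using (h (i - 1)).map (σ : A →+* A)

section DegreeGaps

variable {F : Type*} [Field F]

def degreeGaps (V : Submodule F F[X]) : Set ℕ := {ℓ | ∀ p ∈ V, p ≠ 0 → p.degree ≠ ℓ}

lemma degreeGaps_anti {V W : Submodule F F[X]} (h : V ≤ W) : degreeGaps W ⊆ degreeGaps V :=
  fun _ hℓ p hp => hℓ p (h hp)

lemma finrank_add_card_le_of_le_degreeLT {V : Submodule F F[X]} {n : ℕ} (hV : V ≤ degreeLT F n)
    {t : Finset ℕ} (htn : t ⊆ Finset.range n) (ht : ↑t ⊆ degreeGaps V) :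
    Module.finrank F V + t.card ≤ n := by
  classical
  let s := Finset.range n \ t
  let coeffs : V →ₗ[F] (s → F) := (LinearMap.pi fun i : s => lcoeff F (i : ℕ)) ∘ₗ V.subtype
  have hinj : Function.Injective coeffs := by
    rw [← LinearMap.ker_eq_bot, LinearMap.ker_eq_bot']
    rintro ⟨p, hpV⟩ hp
    by_contra hp0
    have hp0' : p ≠ 0 := fun h => hp0 (Subtype.ext h)
    have hdeg : p.natDegree ∈ s := by
      simp only [s, Finset.mem_sdiff, Finset.mem_range]
      refine ⟨?_, fun hpt => ht hpt p hpV hp0' (degree_eq_natDegree hp0')⟩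
      exact (natDegree_lt_iff_degree_lt hp0').mpr (mem_degreeLT.mp (hV hpV))
    exact leadingCoeff_ne_zero.mpr hp0' (congrFun hp ⟨_, hdeg⟩)
  have hV := LinearMap.finrank_le_finrank_of_injective hinj
  rw [Module.finrank_fintype_fun_eq_card, Fintype.card_coe, Finset.card_sdiff_of_subset htn,
    Finset.card_range] at hV
  have ht := Finset.card_le_card htn
  rw [Finset.card_range] at ht
  omega

lemma mk_degreeGaps_range_le {Φ : F[X] →ₗ[F] F[X]} (hΦ : Function.Injective Φ) {c : ℕ}
    (hdeg : ∀ n, (degreeLT F n).map Φ ≤ degreeLT F (n + c)) :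
    Cardinal.mk (degreeGaps (LinearMap.range Φ)) ≤ c := by
  refine Cardinal.mk_le_iff_forall_finset_subset_card_le.mpr fun t ht => ?_
  set n := (t.sup id).succ
  have hV : Module.finrank F ((degreeLT F n).map Φ) = n := by
    rw [← (Submodule.equivMapOfInjective Φ hΦ _).finrank_eq, (degreeLTEquiv F n).finrank_eq,
      Module.finrank_fin_fun]
  have := finrank_add_card_le_of_le_degreeLT (hdeg n)
    ((Finset.subset_range_sup_succ t).trans (Finset.range_subset_range.mpr (by omega)))
    (ht.trans (degreeGaps_anti LinearMap.map_le_range))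
  omega

lemma rank_span_X_pow_image_le {S : Set ℕ} {c : ℕ} (hS : Cardinal.mk S ≤ c) :
    Module.rank F (Submodule.span F ((X ^ · : ℕ → F[X]) '' S)) ≤ c :=
  (rank_span_le _).trans <| Cardinal.lift_le_nat_iff.mp <|
    Cardinal.mk_image_le_lift.trans (Cardinal.lift_le_nat_iff.mpr hS)

end DegreeGaps

section ShiftOp

variable {F : Type*} [Field F]

/-- The paper's `φ_K` for `K = u / v`, with the shift `σ` realised as `taylor 1`. -/
noncomputable def shiftOp (u v : F[X]) : F[X] →ₗ[F] F[X] :=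
  LinearMap.mulLeft F u ∘ₗ taylor 1 - LinearMap.mulLeft F v

@[simp] lemma shiftOp_apply (u v p : F[X]) : shiftOp u v p = u * taylor 1 p - v * p := rfl

lemma map_shiftOp_degreeLT_le (u v : F[X]) (n : ℕ) :
    (degreeLT F n).map (shiftOp u v) ≤ degreeLT F (n + max u.natDegree v.natDegree) := by
  rintro _ ⟨p, hp, rfl⟩
  rw [shiftOp_apply]
  refine Submodule.sub_mem _ (degreeLT_mono ?_ (mul_mem_degreeLT u (taylor_mem_degreeLT.mpr hp)))
    (degreeLT_mono ?_ (mul_mem_degreeLT v hp)) <;> omega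

lemma map_shiftOp_degreeLT_le_of_natDegree_sub_lt {u v : F[X]}
    (h : (v - u).natDegree < u.natDegree) (n : ℕ) :
    (degreeLT F n).map (shiftOp u v) ≤ degreeLT F (n + (u.natDegree - 1)) := by
  rintro _ ⟨p, hp, rfl⟩
  rcases n with _ | n
  · obtain rfl : p = 0 := by simpa [mem_degreeLT] using hp
    simp
  have hsplit : shiftOp u v p = u * (taylor 1 p - p) - (v - u) * p := by
    rw [shiftOp_apply]
    ring
  rw [hsplit]
  exact Submodule.sub_mem _
    (degreeLT_mono (by omega) (mul_mem_degreeLT u (taylor_sub_mem_degreeLT 1 hp)))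
    (degreeLT_mono (by omega) (mul_mem_degreeLT _ hp))

lemma degreeGaps_range_shiftOp_self [CharZero F] {u : F[X]} (hu : IsUnit u) :
    degreeGaps (LinearMap.range (shiftOp u u)) = ∅ := by
  refine Set.eq_empty_of_forall_notMem fun ℓ hℓ => ?_
  have hdeg : (shiftOp u u (X ^ (ℓ + 1))).degree = ℓ := by
    rw [shiftOp_apply, ← mul_sub, degree_mul, degree_eq_zero_of_isUnit hu, zero_add,
      degree_taylor_one_X_pow_succ_sub]
  exact hℓ _ (LinearMap.mem_range_self _ _) (fun h => by simp [h] at hdeg) hdeg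

lemma eq_zero_of_mul_apply_eq_mul {σ : F[X] ≃ₐ[F] F[X]}
    (hσ : ∀ p, (σ p).natDegree = p.natDegree) {v w p : F[X]}
    (hw : 0 < w.natDegree) (hsr : ∀ i : ℤ, IsCoprime w ((σ ^ i) v)) (h : w * σ p = v * p) :
    p = 0 := by
  induction hn : p.natDegree using Nat.strong_induction_on generalizing w p with
  | _ n ih =>
  by_contra hp0
  have hw0 : w ≠ 0 := ne_zero_of_natDegree_gt hw
  have hwv : IsCoprime w v := by simpa using hsr 0
  obtain ⟨q, rfl⟩ : w ∣ p := hwv.dvd_of_dvd_mul_left ⟨σ p, h.symm⟩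
  have hq0 : q ≠ 0 := right_ne_zero_of_mul hp0
  refine hq0 (ih q.natDegree ?_ ((hσ w).symm ▸ hw)
    (isCoprime_apply_of_forall_isCoprime_zpow_apply σ hsr) ?_ rfl)
  · rw [← hn, natDegree_mul hw0 hq0]
    omega
  · apply mul_left_cancel₀ hw0
    rw [map_mul] at h
    linear_combination h

lemma shiftOp_injective {u v : F[X]} (hu : u ≠ 0) (hne : u ≠ v)
    (hsr : ∀ i : ℤ, IsCoprime u ((taylorEquiv (1 : F) ^ i) v)) :
    Function.Injective (shiftOp u v) := by
  rw [← LinearMap.ker_eq_bot, LinearMap.ker_eq_bot']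
  intro p hp
  by_contra hp0
  have h : u * taylor 1 p = v * p := sub_eq_zero.mp hp
  have hτp : taylor 1 p ≠ 0 := mt (taylor_eq_zero 1 p).mp hp0
  have hv : v ≠ 0 := by
    rintro rfl
    simp [hu, hτp] at h
  rcases Nat.eq_zero_or_pos u.natDegree with hu0 | hpos
  · have hv0 : v.natDegree = 0 := by
      have := congrArg natDegree h
      rw [natDegree_mul hu hτp, natDegree_mul hv hp0, natDegree_taylor] at this
      omega
    have hlc := congrArg leadingCoeff h
    rw [leadingCoeff_mul, leadingCoeff_mul, leadingCoeff_taylor,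
      mul_left_inj' (leadingCoeff_ne_zero.mpr hp0), leadingCoeff, leadingCoeff, hu0, hv0] at hlc
    exact hne (by rw [eq_C_of_natDegree_eq_zero hu0, eq_C_of_natDegree_eq_zero hv0, hlc])
  · exact hp0 (eq_zero_of_mul_apply_eq_mul (fun p => natDegree_taylor p 1) hpos hsr h)

end ShiftOp

theorem standard_complement_dim_bound_general
    (F : Type*) [Field F] [CharZero F]
    (τ : Polynomial F ≃ₐ[F] Polynomial F) (hτ : τ X = X + 1)
    (u v : Polynomial F) (hu : u ≠ 0)
    (hsr : ∀ i : ℤ, IsCoprime u ((τ ^ i) v)) :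
    Module.rank F
      ↥(Submodule.span F {g : Polynomial F | ∃ ℓ : ℕ, g = X ^ ℓ ∧
          ∀ p : Polynomial F, u * τ p - v * p ≠ 0 →
            (u * τ p - v * p).degree ≠ (ℓ : WithBot ℕ)})
      ≤ ((max u.natDegree v.natDegree -
          (if ((v - u).natDegree : ℤ) ≤ (u.natDegree : ℤ) - 1 then 1 else 0)
          : ℕ) : Cardinal) := by
  obtain rfl : τ = taylorEquiv 1 := eq_taylorEquiv_one_of_apply_X hτ
  have hW : {g : F[X] | ∃ ℓ : ℕ, g = X ^ ℓ ∧ ∀ p : F[X], u * taylorEquiv 1 p - v * p ≠ 0 →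
      (u * taylorEquiv 1 p - v * p).degree ≠ (ℓ : WithBot ℕ)} =
      (X ^ ·) '' degreeGaps (LinearMap.range (shiftOp u v)) := by
    ext g
    simp [degreeGaps, eq_comm, and_comm, ← coe_taylorEquiv]
  rw [hW]
  refine rank_span_X_pow_image_le ?_
  rcases eq_or_ne u v with rfl | hne
  · simp [degreeGaps_range_shiftOp_self (isCoprime_self.mp (by simpa using hsr 0))]
  have hinj := shiftOp_injective hu hne hsr
  split_ifs with hβ
  · have hβ' : (v - u).natDegree < u.natDegree := by omega
    have hvu : v.natDegree = u.natDegree := by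
      simpa using natDegree_add_eq_left_of_natDegree_lt hβ'
    rw [hvu, max_self]
    exact mk_degreeGaps_range_le hinj (map_shiftOp_degreeLT_le_of_natDegree_sub_lt hβ')
  · simpa using mk_degreeGaps_range_le hinj (map_shiftOp_degreeLT_le u v)

/-- **Proposition (dimension bound for the standard complement).**
For shift-reduced `K = u/v`, the standard complement `W_K` of `im(φ_K)`
has dimension at most `max(deg u, deg v) − [β ≤ deg u − 1]`, where
`β = max(0, deg(v − u))`. -/
theorem standard_complement_dim_bound
    (F : Type*) [Field F] [CharZero F]
    (τ : Polynomial F ≃ₐ[F] Polynomial F) (hτ : τ X = X + 1)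
    (u v : Polynomial F) (hu : u ≠ 0) (hv : v ≠ 0) (huv : IsCoprime u v)
    (hsr : ∀ i : ℤ, IsCoprime u ((τ ^ i) v)) :
    Module.rank F
      ↥(Submodule.span F {g : Polynomial F | ∃ ℓ : ℕ, g = X ^ ℓ ∧
          ∀ p : Polynomial F, u * τ p - v * p ≠ 0 →
            (u * τ p - v * p).degree ≠ (ℓ : WithBot ℕ)})
      ≤ ((max u.natDegree v.natDegree -
          (if ((v - u).natDegree : ℤ) ≤ (u.natDegree : ℤ) - 1 then 1 else 0)
          : ℕ) : Cardinal) :=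
  standard_complement_dim_bound_general F τ hτ u v hu hsr
end

section
/- Let K = u/v ∈ F(k) be shift-reduced with deg(v − u) > deg(u). Then for every nonzero p ∈ F[k], the degree of φ_K(p) = u·σ(p) − v·p equals deg(v) + deg(p), and consequently W_K has the echelon basis {1, k, …, k^{deg(v)−1}} and dimension deg(v). -/
open Polynomial

/-- **Lemma (Case 1 of the polynomial reduction).** If `K = u/v` is
shift-reduced with `deg(v − u) > deg u`, then for every nonzero `p` the
degree of `φ_K(p) = u·σ(p) − v·p` is `deg v + deg p`; consequently the
standard complement `W_K` is spanned by `1, k, …, k^{deg v − 1}` and has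
dimension `deg v`. -/
theorem standard_complement_case_one
    (F : Type*) [Field F] [CharZero F]
    (τ : Polynomial F ≃ₐ[F] Polynomial F) (hτ : τ X = X + 1)
    (u v : Polynomial F) (hu : u ≠ 0) (hv : v ≠ 0) (huv : IsCoprime u v)
    (hsr : ∀ i : ℤ, IsCoprime u ((τ ^ i) v))
    (hdeg : u.degree < (v - u).degree) :
    (∀ p : Polynomial F, p ≠ 0 →
      (u * τ p - v * p).degree = v.degree + p.degree) ∧
    Submodule.span F {g : Polynomial F | ∃ ℓ : ℕ, g = X ^ ℓ ∧
        ∀ p : Polynomial F, u * τ p - v * p ≠ 0 →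
          (u * τ p - v * p).degree ≠ (ℓ : WithBot ℕ)}
      = Submodule.span F {g : Polynomial F | ∃ i : ℕ, i < v.natDegree ∧ g = X ^ i} ∧
    Module.rank F
      ↥(Submodule.span F {g : Polynomial F | ∃ ℓ : ℕ, g = X ^ ℓ ∧
          ∀ p : Polynomial F, u * τ p - v * p ≠ 0 →
            (u * τ p - v * p).degree ≠ (ℓ : WithBot ℕ)})
      = v.natDegree := by
  classical
  -- τ is composition with X + 1
  have hτeq : ∀ p : Polynomial F, τ p = p.comp (X + 1) := by
    intro p
    have : (τ : Polynomial F →ₐ[F] Polynomial F) = aeval (X + 1) := by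
      apply Polynomial.algHom_ext
      simp [hτ]
    have := congrArg (fun f => (f : Polynomial F →ₐ[F] Polynomial F) p) this
    simpa [aeval_def, eval₂_eq_eval_map, comp] using this
  have hτdeg : ∀ p : Polynomial F, (τ p).degree = p.degree := by
    intro p
    rcases eq_or_ne p 0 with rfl | hp
    · simp
    · have hτp : τ p ≠ 0 := by
        intro h
        exact hp (by simpa using τ.injective (by simpa using h))
      rw [degree_eq_natDegree hp, degree_eq_natDegree hτp, hτeq]
      rw [natDegree_comp]
      have h1 : (X + 1 : Polynomial F).natDegree = 1 := by
        simpa using natDegree_X_add_C (1 : F)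
      rw [h1, mul_one]
  -- deg u < deg v
  have huv' : u.degree < v.degree := by
    have h1 : (v - u).degree ≤ max v.degree u.degree := degree_sub_le v u
    have := lt_of_lt_of_le hdeg h1
    rcases lt_max_iff.1 this with h | h
    · exact h
    · exact absurd h (lt_irrefl _)
  -- main degree formula
  have key : ∀ p : Polynomial F, p ≠ 0 →
      (u * τ p - v * p).degree = v.degree + p.degree := by
    intro p hp
    have h1 : (u * τ p).degree < (v * p).degree := by
      rw [degree_mul, degree_mul, hτdeg]
      have hpb : p.degree ≠ ⊥ := by simpa [degree_eq_bot] using hp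
      exact WithBot.add_lt_add_right hpb huv'
    rw [degree_sub_eq_right_of_degree_lt h1, degree_mul]
  -- sets are equal
  have hsets : {g : Polynomial F | ∃ ℓ : ℕ, g = X ^ ℓ ∧
        ∀ p : Polynomial F, u * τ p - v * p ≠ 0 →
          (u * τ p - v * p).degree ≠ (ℓ : WithBot ℕ)}
      = {g : Polynomial F | ∃ i : ℕ, i < v.natDegree ∧ g = X ^ i} := by
    ext g
    constructor
    · rintro ⟨ℓ, rfl, h⟩
      refine ⟨ℓ, ?_, rfl⟩
      by_contra hℓ
      push_neg at hℓ
      set p : Polynomial F := X ^ (ℓ - v.natDegree) with hpdef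
      have hp : p ≠ 0 := pow_ne_zero _ X_ne_zero
      have hd : (u * τ p - v * p).degree = (ℓ : WithBot ℕ) := by
        rw [key p hp, degree_eq_natDegree hv, hpdef, degree_X_pow,
          ← Nat.cast_add, Nat.add_sub_cancel' hℓ]
      have hnz : u * τ p - v * p ≠ 0 := by
        intro h0
        rw [h0, degree_zero] at hd
        exact (WithBot.bot_ne_coe) hd
      exact h p hnz hd
    · rintro ⟨i, hi, rfl⟩
      refine ⟨i, rfl, ?_⟩
      intro p hnz
      have hp : p ≠ 0 := by
        rintro rfl
        simp at hnz
      rw [key p hp, degree_eq_natDegree hv, degree_eq_natDegree hp, ← Nat.cast_add]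
      intro h
      have := (Nat.cast_injective (R := WithBot ℕ)) h
      omega
  refine ⟨key, by rw [hsets], ?_⟩
  rw [hsets]
  -- the span is degreeLT
  have hspan : Submodule.span F {g : Polynomial F | ∃ i : ℕ, i < v.natDegree ∧ g = X ^ i}
      = degreeLT F v.natDegree := by
    rw [degreeLT_eq_span_X_pow]
    congr 1
    ext g
    simp only [Finset.coe_image, Finset.coe_range, Set.mem_image, Set.mem_Iio,
      Set.mem_setOf_eq]
    constructor
    · rintro ⟨i, hi, rfl⟩; exact ⟨i, hi, rfl⟩
    · rintro ⟨i, hi, rfl⟩; exact ⟨i, hi, rfl⟩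
  rw [hspan]
  have := (degreeLTEquiv F v.natDegree).rank_eq
  rw [this]
  simp
end

section
/- The least common multiple of two shift-free polynomials in F[k] is shift-free if and only if the two polynomials are shift-coprime. -/
open Polynomial

/-- **Lemma.** The least common multiple of two shift-free polynomials is
shift-free if and only if the two polynomials are shift-coprime. -/
theorem lcm_shiftFree_iff_shiftCoprime
    (F : Type*) [Field F] [CharZero F] [DecidableEq F]
    (τ : Polynomial F ≃ₐ[F] Polynomial F) (hτ : τ X = X + 1)
    (f g : Polynomial F)
    (hf0 : f ≠ 0) (hf : ∀ i : ℤ, i ≠ 0 → IsCoprime f ((τ ^ i) f))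
    (hg0 : g ≠ 0) (hg : ∀ i : ℤ, i ≠ 0 → IsCoprime g ((τ ^ i) g)) :
    (lcm f g ≠ 0 ∧ ∀ i : ℤ, i ≠ 0 → IsCoprime (lcm f g) ((τ ^ i) (lcm f g)))
      ↔ (∀ ℓ : ℤ, ℓ ≠ 0 → IsCoprime f ((τ ^ ℓ) g)) := by
  have hmap : ∀ (i : ℤ) (a b : Polynomial F), IsCoprime a b →
      IsCoprime ((τ ^ i) a) ((τ ^ i) b) := fun i a b h =>
    h.map ((τ ^ i : Polynomial F ≃ₐ[F] Polynomial F) : Polynomial F →+* Polynomial F)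
  have hcancel : ∀ (i : ℤ) (a : Polynomial F), (τ ^ i) ((τ ^ (-i)) a) = a := by
    intro i a
    rw [zpow_neg]
    exact AlgEquiv.apply_symm_apply (τ ^ i) a
  constructor
  · rintro ⟨hne, hL⟩ ℓ hℓ
    have h1 : f ∣ lcm f g := dvd_lcm_left f g
    have h2 : (τ ^ ℓ) g ∣ (τ ^ ℓ) (lcm f g) :=
      map_dvd ((τ ^ ℓ : Polynomial F ≃ₐ[F] Polynomial F) : Polynomial F →+* Polynomial F)
        (dvd_lcm_right f g)
    exact ((hL ℓ hℓ).of_isCoprime_of_dvd_left h1).of_isCoprime_of_dvd_right h2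
  · intro hfg
    refine ⟨fun h => ?_, fun i hi => ?_⟩
    · rcases (lcm_eq_zero_iff f g).mp h with h | h
      · exact hf0 h
      · exact hg0 h
    have h1 : lcm f g ∣ f * g := lcm_dvd (dvd_mul_right f g) (dvd_mul_left g f)
    have h2 : (τ ^ i) (lcm f g) ∣ (τ ^ i) f * (τ ^ i) g := by
      have := map_dvd ((τ ^ i : Polynomial F ≃ₐ[F] Polynomial F) : Polynomial F →+* Polynomial F) h1
      simpa [map_mul] using this
    have hgf : IsCoprime g ((τ ^ i) f) := by
      have := hmap i _ _ (hfg (-i) (neg_ne_zero.mpr hi))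
      rw [hcancel i g] at this
      exact this.symm
    have hbig : IsCoprime (f * g) ((τ ^ i) f * (τ ^ i) g) :=
      IsCoprime.mul_left
        (IsCoprime.mul_right (hf i hi) (hfg i hi))
        (IsCoprime.mul_right hgf (hg i hi))
    exact (hbig.of_isCoprime_of_dvd_left h1).of_isCoprime_of_dvd_right h2
end

section
/- Let F ⊆ ℂ be a field and E an algebraic extension field of F contained in ℂ. If a sequence (a_n) of complex numbers is P-recursive over E (i.e., satisfies a nontrivial linear recurrence with coefficients in E[n]), then it is also P-recursive over F. -/
set_option maxHeartbeats 2000000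
set_option synthInstance.maxHeartbeats 1000000
open Polynomial

/-- A sequence of complex numbers is P-recursive over a subfield `F` of `ℂ`
if it satisfies a nontrivial linear recurrence whose polynomial coefficients
have entries in `F`. -/
def IsPRecursiveOver (F : Subfield ℂ) (a : ℕ → ℂ) : Prop :=
  ∃ ρ : ℕ, ∃ p : ℕ → Polynomial F,
    (∃ j ≤ ρ, p j ≠ 0) ∧
    ∀ n : ℕ, (∑ j ∈ Finset.range (ρ + 1),
      ((p j).map F.subtype).eval (n : ℂ) * a (n + j)) = 0

noncomputable section PRecAux

variable {K : Type*} [Field K]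

/-- Evaluation of a `K`-polynomial at a natural number, viewed in `ℂ` via `κ`. -/
def evc (κ : K →+* ℂ) (q : Polynomial K) (n : ℕ) : ℂ := (q.map κ).eval (n : ℂ)

lemma evc_mul (κ : K →+* ℂ) (q r : Polynomial K) (n : ℕ) :
    evc κ (q * r) n = evc κ q n * evc κ r n := by simp [evc]

lemma evc_one (κ : K →+* ℂ) (n : ℕ) : evc κ (1 : Polynomial K) n = 1 := by simp [evc]

lemma evc_zero (κ : K →+* ℂ) (n : ℕ) : evc κ (0 : Polynomial K) n = 0 := by simp [evc]

lemma evc_sub (κ : K →+* ℂ) (q r : Polynomial K) (n : ℕ) :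
    evc κ (q - r) n = evc κ q n - evc κ r n := by simp [evc]

lemma evc_sum {ι : Type*} (κ : K →+* ℂ) (s : Finset ι) (f : ι → Polynomial K) (n : ℕ) :
    evc κ (∑ x ∈ s, f x) n = ∑ x ∈ s, evc κ (f x) n := by
  simp [evc, Polynomial.map_sum, eval_finset_sum]

lemma evc_taylor (κ : K →+* ℂ) (q : Polynomial K) (n : ℕ) :
    evc κ (taylor 1 q) n = evc κ q (n + 1) := by
  simp only [evc, taylor_apply, map_comp, Polynomial.map_add, map_X, Polynomial.map_C,
    map_one, Polynomial.map_one, eval_one, eval_comp, eval_add, eval_X, eval_C]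
  push_cast
  ring_nf

/-- The auxiliary "numerator" vectors. -/
def uA (σ : ℕ) (P : ℕ → Polynomial K) : ℕ → ℕ → Polynomial K
  | 0 => fun i => if i = 0 then 1 else 0
  | (k+1) => fun i =>
      (if i = 0 then 0 else P (σ+1) * taylor 1 (uA σ P k (i-1))) -
        taylor 1 (uA σ P k σ) * P i

/-- The auxiliary "denominator" polynomials. -/
def dA (σ : ℕ) (P : ℕ → Polynomial K) : ℕ → Polynomial K
  | 0 => 1
  | (k+1) => P (σ+1) * taylor 1 (dA σ P k)

lemma key_identity (κ : K →+* ℂ) (a : ℕ → ℂ) (σ : ℕ) (P : ℕ → Polynomial K)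
    (hrec : ∀ n : ℕ, (∑ j ∈ Finset.range (σ + 2), evc κ (P j) n * a (n + j)) = 0) :
    ∀ k n : ℕ, evc κ (dA σ P k) n * a (n + k) =
      ∑ i ∈ Finset.range (σ + 1), evc κ (uA σ P k i) n * a (n + i) := by
  intro k
  induction k with
  | zero =>
    intro n
    rw [show (∑ i ∈ Finset.range (σ + 1), evc κ (uA σ P 0 i) n * a (n + i)) =
        ∑ i ∈ Finset.range (σ + 1), (if i = 0 then a n else 0) from by
      refine Finset.sum_congr rfl fun i _ => ?_
      by_cases hi : i = 0 <;> simp [uA, hi, evc_one, evc_zero]]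
    rw [Finset.sum_ite_eq' (Finset.range (σ+1)) 0 (fun _ => a n)]
    simp [dA, evc_one]
  | succ k ih =>
    intro n
    have hstep : evc κ (P (σ+1)) n * a (n + (σ + 1)) =
        - ∑ j ∈ Finset.range (σ + 1), evc κ (P j) n * a (n + j) := by
      have := hrec n
      rw [Finset.sum_range_succ] at this
      linear_combination this
    have hLHS : evc κ (dA σ P (k+1)) n * a (n + (k+1)) =
        evc κ (P (σ+1)) n * (∑ i ∈ Finset.range (σ + 1),
          evc κ (uA σ P k i) (n+1) * a ((n+1) + i)) := by
      rw [show dA σ P (k+1) = P (σ+1) * taylor 1 (dA σ P k) from rfl, evc_mul, evc_taylor]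
      rw [mul_assoc, ← ih (n+1)]
      ring_nf
    rw [hLHS]
    have hRHS : (∑ i ∈ Finset.range (σ + 1), evc κ (uA σ P (k+1) i) n * a (n + i)) =
        (∑ i ∈ Finset.range (σ + 1),
          (if i = 0 then 0 else evc κ (P (σ+1)) n * evc κ (uA σ P k (i-1)) (n+1)) * a (n + i))
        - evc κ (uA σ P k σ) (n+1) * ∑ j ∈ Finset.range (σ + 1), evc κ (P j) n * a (n + j) := by
      rw [Finset.mul_sum, ← Finset.sum_sub_distrib]
      refine Finset.sum_congr rfl fun i _ => ?_
      rw [show uA σ P (k+1) i = (if i = 0 then 0 else P (σ+1) * taylor 1 (uA σ P k (i-1))) -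
          taylor 1 (uA σ P k σ) * P i from rfl, evc_sub, sub_mul, evc_mul, evc_taylor]
      by_cases hi : i = 0 <;> simp [hi, evc_zero, evc_mul, evc_taylor] <;> ring
    rw [hRHS]
    rw [Finset.sum_range_succ (fun i => evc κ (uA σ P k i) (n+1) * a ((n+1) + i)) σ]
    rw [mul_add, show (n+1) + σ = n + (σ+1) from by ring]
    rw [show evc κ (P (σ+1)) n * (evc κ (uA σ P k σ) (n+1) * a (n + (σ+1))) =
        evc κ (uA σ P k σ) (n+1) * (evc κ (P (σ+1)) n * a (n + (σ+1))) from by ring, hstep]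
    rw [mul_neg, ← sub_eq_add_neg]
    congr 1
    rw [Finset.sum_range_succ' (fun i =>
      (if i = 0 then 0 else evc κ (P (σ+1)) n * evc κ (uA σ P k (i-1)) (n+1)) * a (n + i)) σ]
    simp only [Nat.succ_ne_zero, if_false, Nat.add_sub_cancel, if_pos rfl, zero_mul, add_zero,
      reduceIte]
    rw [Finset.mul_sum]
    refine Finset.sum_congr rfl fun i _ => ?_
    rw [show (n+1) + i = n + (i+1) from by ring]
    ring

lemma taylor_ne_zero' {q : Polynomial K} (hq : q ≠ 0) : taylor (1:K) q ≠ 0 := by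
  intro h
  exact hq (taylor_injective 1 (by simpa using h))

lemma uA_natDegree_le (σ : ℕ) (P : ℕ → Polynomial K) (B : ℕ)
    (hB : ∀ j, j ≤ σ + 1 → (P j).natDegree ≤ B) :
    ∀ k i, i ≤ σ → (uA σ P k i).natDegree ≤ k * B := by
  intro k
  induction k with
  | zero => intro i _; by_cases hi : i = 0 <;> simp [uA, hi]
  | succ k ih =>
    intro i hi
    rw [show uA σ P (k+1) i = (if i = 0 then 0 else P (σ+1) * taylor 1 (uA σ P k (i-1))) -
        taylor 1 (uA σ P k σ) * P i from rfl]
    refine (natDegree_sub_le _ _).trans (max_le ?_ ?_)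
    · by_cases hi0 : i = 0
      · simp [hi0]
      · rw [if_neg hi0]
        refine (natDegree_mul_le).trans ?_
        rw [natDegree_taylor]
        have h1 := hB (σ+1) le_rfl
        have h2 := ih (i-1) (by omega)
        have hmul : (k+1) * B = k * B + B := by ring
        omega
    · refine (natDegree_mul_le).trans ?_
      rw [natDegree_taylor]
      have h1 := hB i (by omega)
      have h2 := ih σ le_rfl
      have hmul : (k+1) * B = k * B + B := by ring
      omega

lemma dA_natDegree_le (σ : ℕ) (P : ℕ → Polynomial K) (B : ℕ)
    (hB : ∀ j, j ≤ σ + 1 → (P j).natDegree ≤ B) :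
    ∀ k, (dA σ P k).natDegree ≤ k * B := by
  intro k
  induction k with
  | zero => simp [dA]
  | succ k ih =>
    rw [show dA σ P (k+1) = P (σ+1) * taylor 1 (dA σ P k) from rfl]
    refine (natDegree_mul_le).trans ?_
    rw [natDegree_taylor]
    have := hB (σ+1) le_rfl
    have hmul : (k+1) * B = k * B + B := by ring
    omega

lemma dA_ne_zero (σ : ℕ) (P : ℕ → Polynomial K) (hP : P (σ+1) ≠ 0) :
    ∀ k, dA σ P k ≠ 0 := by
  intro k
  induction k with
  | zero => simp [dA]
  | succ k ih =>
    exact mul_ne_zero hP (taylor_ne_zero' ih)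

lemma iterTaylor_natDegree (q : Polynomial K) : ∀ k,
    ((fun r : Polynomial K => taylor 1 r)^[k] q).natDegree = q.natDegree := by
  intro k
  induction k with
  | zero => rfl
  | succ k ih => rw [Function.iterate_succ_apply', natDegree_taylor, ih]

lemma iterTaylor_ne_zero {q : Polynomial K} (hq : q ≠ 0) : ∀ k,
    ((fun r : Polynomial K => taylor 1 r)^[k] q) ≠ 0 := by
  intro k
  induction k with
  | zero => exact hq
  | succ k ih => rw [Function.iterate_succ_apply']; exact taylor_ne_zero' ih

lemma dA_succ_eq (σ : ℕ) (P : ℕ → Polynomial K) :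
    ∀ k, dA σ P (k+1) = dA σ P k * (fun r : Polynomial K => taylor 1 r)^[k] (P (σ+1)) := by
  intro k
  induction k with
  | zero => simp [dA]
  | succ k ih =>
    calc dA σ P (k+1+1) = P (σ+1) * taylor 1 (dA σ P (k+1)) := rfl
      _ = P (σ+1) * taylor 1 (dA σ P k * (fun r : Polynomial K => taylor 1 r)^[k] (P (σ+1))) := by
          rw [ih]
      _ = (P (σ+1) * taylor 1 (dA σ P k)) *
            taylor 1 ((fun r : Polynomial K => taylor 1 r)^[k] (P (σ+1))) := by
          rw [taylor_mul]; ring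
      _ = dA σ P (k+1) * (fun r : Polynomial K => taylor 1 r)^[k+1] (P (σ+1)) := by
          rw [Function.iterate_succ_apply']
          rfl

lemma dA_cofactor (σ : ℕ) (P : ℕ → Polynomial K) (hP : P (σ+1) ≠ 0) (B : ℕ)
    (hB : ∀ j, j ≤ σ + 1 → (P j).natDegree ≤ B) :
    ∀ j k, ∃ e : Polynomial K, e ≠ 0 ∧ dA σ P (k + j) = dA σ P k * e ∧ e.natDegree ≤ j * B := by
  intro j
  induction j with
  | zero => intro k; exact ⟨1, one_ne_zero, by simp, by simp⟩
  | succ j ih =>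
    intro k
    obtain ⟨e', he'0, he', hed⟩ := ih (k+1)
    refine ⟨(fun r : Polynomial K => taylor 1 r)^[k] (P (σ+1)) * e',
      mul_ne_zero (iterTaylor_ne_zero hP k) he'0, ?_, ?_⟩
    · rw [show k + (j+1) = (k+1) + j from by ring, he', dA_succ_eq]
      ring
    · refine (natDegree_mul_le).trans ?_
      rw [iterTaylor_natDegree]
      have := hB (σ+1) le_rfl
      have hmul : (j+1) * B = j * B + B := by ring
      omega

/-- nonvanishing for large n -/
lemma eventually_ne_zero (κ : K →+* ℂ) (q : Polynomial K) (hq : q ≠ 0) :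
    ∃ n₀ : ℕ, ∀ n, n₀ ≤ n → (q.map κ).eval (n : ℂ) ≠ 0 := by
  have hq' : q.map κ ≠ 0 := by
    intro h
    exact hq (Polynomial.map_injective κ κ.injective (by simpa using h))
  have hfin : {x : ℂ | (q.map κ).IsRoot x}.Finite := Polynomial.finite_setOf_isRoot hq'
  have hfin2 : {n : ℕ | (q.map κ).eval (n : ℂ) = 0}.Finite := by
    have : {n : ℕ | (q.map κ).eval (n : ℂ) = 0} =
        (fun n : ℕ => (n : ℂ)) ⁻¹' {x : ℂ | (q.map κ).IsRoot x} := rfl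
    rw [this]
    exact Set.Finite.preimage (Function.Injective.injOn Nat.cast_injective) hfin
  obtain ⟨n₀, hn₀⟩ := hfin2.bddAbove
  refine ⟨n₀ + 1, fun n hn hev => ?_⟩
  have := hn₀ hev
  omega

/-- From a recurrence valid for large `n` with not-all-zero `F`-coefficients,
get full P-recursiveness. -/
lemma isPRecursive_of_eventually (F : Subfield ℂ) (a : ℕ → ℂ) (N n₀ : ℕ)
    (γ : ℕ → Polynomial F) (hne : ∃ j ≤ N, γ j ≠ 0)
    (hrec : ∀ n, n₀ ≤ n →
      (∑ k ∈ Finset.range (N + 1), ((γ k).map F.subtype).eval (n : ℂ) * a (n + k)) = 0) :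
    IsPRecursiveOver F a := by
  classical
  set r : Polynomial F := ∏ t ∈ Finset.range n₀, (X - C ((t : ℕ) : F)) with hr
  have hr0 : r ≠ 0 := by
    refine Finset.prod_ne_zero_iff.mpr fun t _ => X_sub_C_ne_zero _
  have hrev : ∀ n : ℕ, (r.map F.subtype).eval (n : ℂ) =
      ∏ t ∈ Finset.range n₀, ((n : ℂ) - (t : ℂ)) := by
    intro n
    rw [hr, Polynomial.map_prod, eval_prod]
    refine Finset.prod_congr rfl fun t _ => ?_
    simp [Polynomial.map_sub]
  refine ⟨N, fun k => r * γ k, ⟨hne.choose, hne.choose_spec.1,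
    mul_ne_zero hr0 hne.choose_spec.2⟩, fun n => ?_⟩
  have : ∀ k, (((r * γ k).map F.subtype).eval (n : ℂ)) =
      (r.map F.subtype).eval (n : ℂ) * ((γ k).map F.subtype).eval (n : ℂ) := by
    intro k; simp [Polynomial.map_mul]
  simp only [this]
  by_cases hn : n₀ ≤ n
  · calc (∑ k ∈ Finset.range (N + 1),
        (r.map F.subtype).eval (n : ℂ) * ((γ k).map F.subtype).eval (n : ℂ) * a (n + k))
        = (r.map F.subtype).eval (n : ℂ) * ∑ k ∈ Finset.range (N + 1),
            ((γ k).map F.subtype).eval (n : ℂ) * a (n + k) := by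
          rw [Finset.mul_sum]; exact Finset.sum_congr rfl fun k _ => by ring
      _ = 0 := by rw [hrec n hn, mul_zero]
  · have hz : (r.map F.subtype).eval (n : ℂ) = 0 := by
      rw [hrev]
      exact Finset.prod_eq_zero (i := n) (Finset.mem_range.mpr (by omega)) (by simp)
    simp [hz]

lemma coeff_sum_C_X_pow {R : Type*} [Semiring R] (M : ℕ) (c : Fin (M+1) → R) (s : Fin (M+1)) :
    (∑ s' : Fin (M+1), C (c s') * X ^ (s' : ℕ)).coeff (s : ℕ) = c s := by
  rw [finset_sum_coeff]
  simp only [coeff_C_mul, coeff_X_pow, mul_ite, mul_one, mul_zero, Fin.val_eq_val]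
  rw [Finset.sum_ite_eq Finset.univ s (fun s' => c s')]
  simp

/-- The main work lemma. -/
lemma main_step (F : Subfield ℂ) {K : Type*} [Field K] [Algebra F K] [FiniteDimensional F K]
    (κ : K →+* ℂ) (hκ : ∀ c : F, κ (algebraMap F K c) = (c : ℂ))
    (a : ℕ → ℂ) (σ : ℕ) (P : ℕ → Polynomial K) (hP : P (σ+1) ≠ 0)
    (hrec : ∀ n : ℕ, (∑ j ∈ Finset.range (σ + 2), evc κ (P j) n * a (n + j)) = 0) :
    IsPRecursiveOver F a := by
  classical
  set d := Module.finrank F K with hdd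
  have hd : 1 ≤ d := Module.finrank_pos
  set B := Finset.sup (Finset.range (σ+2)) (fun j => (P j).natDegree) with hBB
  have hB : ∀ j, j ≤ σ + 1 → (P j).natDegree ≤ B := by
    intro j hj
    exact Finset.le_sup (f := fun j => (P j).natDegree) (Finset.mem_range.mpr (by omega))
  set N := (σ + 1) * d with hNN
  have hN1 : 1 ≤ N := by
    have := Nat.mul_le_mul (Nat.succ_le_succ (Nat.zero_le σ)) hd
    simpa [hNN] using Nat.one_le_iff_ne_zero.mpr (by positivity)
  set L := N * B with hLL
  set m := N * L with hmm
  set t := m + L + 1 with htt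
  -- cofactors
  have hco : ∀ k : ℕ, ∃ e : Polynomial K, k ≤ N →
      (e ≠ 0 ∧ dA σ P N = dA σ P k * e ∧ e.natDegree ≤ (N - k) * B) := by
    intro k
    by_cases hk : k ≤ N
    · obtain ⟨e, he⟩ := dA_cofactor σ P hP B hB (N - k) k
      rw [show k + (N - k) = N from by omega] at he
      exact ⟨e, fun _ => he⟩
    · exact ⟨1, fun hkk => absurd hkk hk⟩
  choose e he using hco
  have hkey := key_identity κ a σ P hrec
  have hid : ∀ k, k ≤ N → ∀ n : ℕ, evc κ (dA σ P N) n * a (n + k) =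
      ∑ i ∈ Finset.range (σ + 1), evc κ (e k * uA σ P k i) n * a (n + i) := by
    intro k hk n
    obtain ⟨he0, hedN, hed⟩ := he k hk
    rw [hedN, evc_mul]
    calc evc κ (dA σ P k) n * evc κ (e k) n * a (n + k)
        = evc κ (e k) n * (evc κ (dA σ P k) n * a (n + k)) := by ring
      _ = evc κ (e k) n *
          ∑ i ∈ Finset.range (σ + 1), evc κ (uA σ P k i) n * a (n + i) := by rw [hkey k n]
      _ = ∑ i ∈ Finset.range (σ + 1), evc κ (e k * uA σ P k i) n * a (n + i) := by
          rw [Finset.mul_sum]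
          exact Finset.sum_congr rfl fun i _ => by rw [evc_mul]; ring
  have hWdeg : ∀ k, k ≤ N → ∀ i, i ≤ σ → (e k * uA σ P k i).natDegree ≤ L := by
    intro k hk i hi
    obtain ⟨he0, hedN, hed⟩ := he k hk
    refine natDegree_mul_le.trans ?_
    have h1 := uA_natDegree_le σ P B hB k i hi
    have h2 : (N - k) * B + k * B = L := by
      rw [hLL, ← Nat.add_mul]
      congr 1
      omega
    omega
  -- the G construction
  set G : (Fin (m+1) → F) → Polynomial K :=
    fun c => ∑ s : Fin (m+1), C (algebraMap F K (c s)) * X ^ (s : ℕ) with hGG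
  have hGadd : ∀ c₁ c₂, G (c₁ + c₂) = G c₁ + G c₂ := by
    intro c₁ c₂
    rw [hGG, ← Finset.sum_add_distrib]
    refine Finset.sum_congr rfl fun s _ => ?_
    simp [map_add, add_mul]
  have hGsmul : ∀ (x : F) c, G (x • c) = C (algebraMap F K x) * G c := by
    intro x c
    rw [hGG, Finset.mul_sum]
    refine Finset.sum_congr rfl fun s _ => ?_
    simp only [Pi.smul_apply, smul_eq_mul, map_mul, C_mul]
    ring
  have hGdeg : ∀ c, (G c).natDegree ≤ m := by
    intro c
    refine natDegree_sum_le_of_forall_le _ _ fun s _ => ?_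
    refine natDegree_mul_le.trans ?_
    simp only [natDegree_C, natDegree_X_pow, zero_add]
    omega
  -- the linear map
  set Φ : (Fin (N+1) → Fin (m+1) → F) →ₗ[F] (Fin (σ+1) → Fin t → K) :=
    { toFun := fun γ i s => (∑ k : Fin (N+1), G (γ k) * (e k * uA σ P k i)).coeff (s : ℕ),
      map_add' := by
        intro x y
        funext i s
        simp only [Pi.add_apply]
        rw [show (∑ k : Fin (N+1), G (x k + y k) * (e k * uA σ P k i)) =
            (∑ k : Fin (N+1), G (x k) * (e k * uA σ P k i)) +
            (∑ k : Fin (N+1), G (y k) * (e k * uA σ P k i)) from by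
          rw [← Finset.sum_add_distrib]
          exact Finset.sum_congr rfl fun k _ => by rw [hGadd]; ring]
        rw [coeff_add]
      map_smul' := by
        intro x γ
        funext i s
        simp only [RingHom.id_apply, Pi.smul_apply]
        rw [show (∑ k : Fin (N+1), G (x • γ k) * (e k * uA σ P k i)) =
            C (algebraMap F K x) * ∑ k : Fin (N+1), G (γ k) * (e k * uA σ P k i) from by
          rw [Finset.mul_sum]
          exact Finset.sum_congr rfl fun k _ => by rw [hGsmul]; ring]
        rw [coeff_C_mul, Algebra.smul_def] } with hΦΦ
  -- dimension count
  have hfr1 : Module.finrank F (Fin (N+1) → Fin (m+1) → F) = (N+1) * (m+1) := by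
    rw [Module.finrank_pi_fintype F]
    simp [Module.finrank_pi, Finset.sum_const, Fintype.card_fin, mul_comm]
  have hfr2 : Module.finrank F (Fin (σ+1) → Fin t → K) = ((σ+1) * d) * t := by
    rw [Module.finrank_pi_fintype F]
    have hinner : Module.finrank F (Fin t → K) = t * d := by
      rw [Module.finrank_pi_fintype F]
      simp [hdd, Finset.sum_const, Fintype.card_fin, mul_comm]
    simp [hinner, Finset.sum_const, Fintype.card_fin]
    ring
  have hlt : ((σ+1) * d) * t < (N+1) * (m+1) := by
    have h1 : ((σ+1) * d) * t = N * m + m + N := by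
      rw [← hNN, htt, hmm, hLL]
      ring
    have h2 : (N+1) * (m+1) = (N * m + m + N) + 1 := by
      have : m = N * L := hmm
      rw [this, hLL]
      ring
    rw [h1, h2]
    omega
  have hninj : ¬ Function.Injective Φ := by
    intro hinj
    have hle := LinearMap.finrank_le_finrank_of_injective hinj
    rw [hfr1, hfr2] at hle
    omega
  have hker : ∃ γ : Fin (N+1) → Fin (m+1) → F, γ ≠ 0 ∧ Φ γ = 0 := by
    rw [← LinearMap.ker_eq_bot] at hninj
    obtain ⟨γ, hγmem, hγ0⟩ := (Submodule.ne_bot_iff _).mp hninj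
    exact ⟨γ, hγ0, hγmem⟩
  obtain ⟨γ, hγ0, hγker⟩ := hker
  -- polynomial identities
  have hQ : ∀ i : Fin (σ+1), (∑ k : Fin (N+1), G (γ k) * (e k * uA σ P k (i : ℕ))) = 0 := by
    intro i
    have hdeg : (∑ k : Fin (N+1), G (γ k) * (e k * uA σ P k (i : ℕ))).natDegree ≤ m + L := by
      refine natDegree_sum_le_of_forall_le _ _ fun k _ => ?_
      refine natDegree_mul_le.trans ?_
      have h1 := hGdeg (γ k)
      have h2 := hWdeg k (by omega) i (by omega)
      omega
    ext s
    rw [coeff_zero]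
    by_cases hs : s < t
    · have := congrFun (congrFun hγker i) ⟨s, hs⟩
      simpa [hΦΦ] using this
    · exact coeff_eq_zero_of_natDegree_lt (by omega)
  -- extended coefficient functions
  set γ' : ℕ → Fin (m+1) → F := fun k => if h : k < N+1 then γ ⟨k, h⟩ else 0 with hγ'
  set g : ℕ → Polynomial F := fun k => ∑ s : Fin (m+1), C (γ' k s) * X ^ (s : ℕ) with hgg
  have hmapg : ∀ k, (g k).map (algebraMap F K) = G (γ' k) := by
    intro k
    rw [hgg, hGG, Polynomial.map_sum]
    refine Finset.sum_congr rfl fun s _ => ?_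
    simp [Polynomial.map_mul, Polynomial.map_pow]
  have hcomp : κ.comp (algebraMap F K) = F.subtype := RingHom.ext fun c => hκ c
  have hgev : ∀ k (n : ℕ), evc κ (G (γ' k)) n = ((g k).map F.subtype).eval (n : ℂ) := by
    intro k n
    rw [evc, ← hmapg, Polynomial.map_map, hcomp]
  -- the big identity
  have hbig : ∀ n : ℕ, evc κ (dA σ P N) n *
      (∑ k ∈ Finset.range (N+1), ((g k).map F.subtype).eval (n : ℂ) * a (n + k)) = 0 := by
    intro n
    calc evc κ (dA σ P N) n *
        (∑ k ∈ Finset.range (N+1), ((g k).map F.subtype).eval (n : ℂ) * a (n + k))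
        = ∑ k ∈ Finset.range (N+1), evc κ (G (γ' k)) n *
            (evc κ (dA σ P N) n * a (n + k)) := by
          rw [Finset.mul_sum]
          exact Finset.sum_congr rfl fun k _ => by rw [hgev]; ring
      _ = ∑ k ∈ Finset.range (N+1), evc κ (G (γ' k)) n *
            (∑ i ∈ Finset.range (σ+1), evc κ (e k * uA σ P k i) n * a (n + i)) := by
          refine Finset.sum_congr rfl fun k hk => ?_
          rw [hid k (by simpa using Nat.lt_succ_iff.mp (Finset.mem_range.mp hk))]
      _ = ∑ k ∈ Finset.range (N+1), ∑ i ∈ Finset.range (σ+1),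
            evc κ (G (γ' k)) n * (evc κ (e k * uA σ P k i) n * a (n + i)) := by
          exact Finset.sum_congr rfl fun k _ => by rw [Finset.mul_sum]
      _ = ∑ i ∈ Finset.range (σ+1), ∑ k ∈ Finset.range (N+1),
            evc κ (G (γ' k)) n * (evc κ (e k * uA σ P k i) n * a (n + i)) := Finset.sum_comm
      _ = ∑ i ∈ Finset.range (σ+1),
            (∑ k ∈ Finset.range (N+1), evc κ (G (γ' k) * (e k * uA σ P k i)) n) * a (n + i) := by
          refine Finset.sum_congr rfl fun i _ => ?_
          rw [Finset.sum_mul]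
          refine Finset.sum_congr rfl fun k _ => ?_
          simp only [evc_mul]
          ring
      _ = 0 := by
          refine Finset.sum_eq_zero fun i hi => ?_
          have hi' : i < σ + 1 := Finset.mem_range.mp hi
          have : (∑ k ∈ Finset.range (N+1), G (γ' k) * (e k * uA σ P k i)) = 0 := by
            have := hQ ⟨i, hi'⟩
            rw [← Fin.sum_univ_eq_sum_range (fun k => G (γ' k) * (e k * uA σ P k i)) (N+1)]
            simp only at this ⊢
            rw [show (fun (k : Fin (N+1)) => G (γ' (k : ℕ)) * (e (k : ℕ) * uA σ P (k : ℕ) i)) =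
                (fun (k : Fin (N+1)) => G (γ k) * (e (k : ℕ) * uA σ P (k : ℕ) i)) from by
              funext k
              congr 2
              rw [hγ']
              simp [k.isLt]]
            exact this
          rw [← evc_sum, this, evc_zero, zero_mul]
  -- nonvanishing and conclusion
  obtain ⟨n₀, hn₀⟩ := eventually_ne_zero κ (dA σ P N) (dA_ne_zero σ P hP N)
  have hfinal : ∀ n, n₀ ≤ n →
      (∑ k ∈ Finset.range (N+1), ((g k).map F.subtype).eval (n : ℂ) * a (n + k)) = 0 := by
    intro n hn
    have := hbig n
    rcases mul_eq_zero.mp this with h | h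
    · exact absurd h (hn₀ n hn)
    · exact h
  -- nontriviality
  have hgne : ∃ j ≤ N, g j ≠ 0 := by
    have : ∃ k : Fin (N+1), γ k ≠ 0 := by
      by_contra hcon
      push_neg at hcon
      exact hγ0 (funext fun k => hcon k)
    obtain ⟨k, hk⟩ := this
    have : ∃ s : Fin (m+1), γ k s ≠ 0 := by
      by_contra hcon
      push_neg at hcon
      exact hk (funext fun s => hcon s)
    obtain ⟨s, hs⟩ := this
    refine ⟨(k : ℕ), by omega, fun hgz => ?_⟩
    have : (g (k : ℕ)).coeff (s : ℕ) = γ' (k : ℕ) s := coeff_sum_C_X_pow m (γ' (k : ℕ)) s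
    rw [hgz, coeff_zero] at this
    have hγ'k : γ' (k : ℕ) s = γ k s := by
      rw [hγ']
      simp [k.isLt]
    rw [hγ'k] at this
    exact hs this.symm
  exact isPRecursive_of_eventually F a N n₀ g hgne hfinal

end PRecAux


/-- **Lemma.** If `E` is an algebraic extension field of `F` (inside `ℂ`)
and a sequence is P-recursive over `F`... -/
theorem pRecursive_descend_algebraic
    (F E : Subfield ℂ) (hFE : F ≤ E)
    (halg : ∀ x : ℂ, x ∈ E →
      ∃ q : Polynomial F, q ≠ 0 ∧ (q.map F.subtype).eval x = 0)
    (a : ℕ → ℂ) (h : IsPRecursiveOver E a) :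
    IsPRecursiveOver F a := by
  classical
  obtain ⟨ρ₀, p, ⟨j₀, hj₀, hpj₀⟩, hrec⟩ := h
  -- truncate to the greatest nonzero coefficient index
  set ρ' := Nat.findGreatest (fun j => p j ≠ 0) ρ₀ with hρ'
  have hρ'ne : p ρ' ≠ 0 := by
    have := Nat.findGreatest_spec (P := fun j => p j ≠ 0) hj₀ hpj₀
    simpa [hρ'] using this
  have hρ'le : ρ' ≤ ρ₀ := Nat.findGreatest_le ρ₀
  have htrunc : ∀ n : ℕ, (∑ j ∈ Finset.range (ρ' + 1),
      ((p j).map E.subtype).eval (n : ℂ) * a (n + j)) = 0 := by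
    intro n
    have hsub : Finset.range (ρ' + 1) ⊆ Finset.range (ρ₀ + 1) :=
      Finset.range_subset_range.mpr (by omega)
    have hzero : ∀ j ∈ Finset.range (ρ₀ + 1), j ∉ Finset.range (ρ' + 1) →
        ((p j).map E.subtype).eval (n : ℂ) * a (n + j) = 0 := by
      intro j hj hj'
      have hjρ₀ : j ≤ ρ₀ := by simpa using Nat.lt_succ_iff.mp (Finset.mem_range.mp hj)
      have : p j = 0 := by
        by_contra hc
        exact hj' (Finset.mem_range.mpr (Nat.lt_succ_iff.mpr
          (Nat.le_findGreatest (P := fun j => p j ≠ 0) hjρ₀ hc)))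
      simp [this]
    rw [Finset.sum_subset hsub hzero]
    exact hrec n
  -- arrange for the leading index to be positive
  obtain ⟨σ, P', hP'ne, hrec'⟩ : ∃ σ : ℕ, ∃ P' : ℕ → Polynomial E, P' (σ + 1) ≠ 0 ∧
      ∀ n : ℕ, (∑ j ∈ Finset.range (σ + 2),
        ((P' j).map E.subtype).eval (n : ℂ) * a (n + j)) = 0 := by
    rcases Nat.eq_zero_or_pos ρ' with h0 | hpos
    · refine ⟨0, fun j => if j = 1 then taylor 1 (p 0) else 0,
        by simpa using taylor_ne_zero' (by rwa [h0] at hρ'ne), fun n => ?_⟩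
      have h1 := htrunc (n + 1)
      rw [h0] at h1
      simp only [Finset.sum_range_succ, Finset.sum_range_zero, zero_add] at h1 ⊢
      have ht : (((taylor (1 : E) (p 0)).map E.subtype).eval ((n : ℕ) : ℂ)) =
          ((p 0).map E.subtype).eval (((n + 1 : ℕ) : ℕ) : ℂ) :=
        evc_taylor E.subtype (p 0) n
      have e0 : (if (0:ℕ) = 1 then taylor 1 (p 0) else (0 : Polynomial E)) = 0 := by norm_num
      have e1 : (if (1:ℕ) = 1 then taylor 1 (p 0) else (0 : Polynomial E)) = taylor 1 (p 0) := by
        norm_num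
      simp only [if_true]
      rw [e0, Polynomial.map_zero, eval_zero, zero_mul, zero_add, ht]
      simpa using h1
    · obtain ⟨σ, hσ⟩ : ∃ σ, ρ' = σ + 1 := ⟨ρ' - 1, by omega⟩
      exact ⟨σ, p, by rwa [hσ] at hρ'ne, by
        intro n
        have := htrunc n
        rwa [hσ] at this⟩
  -- the coefficient set
  set q : ℕ → Polynomial ℂ := fun j => (P' j).map E.subtype with hq
  set S : Set ℂ := ⋃ j ∈ Finset.range (σ + 2),
    (insert (0 : ℂ) ((fun i => (q j).coeff i) '' ↑(q j).support)) with hS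
  have hcoeffS : ∀ j, j ≤ σ + 1 → ∀ i, (q j).coeff i ∈ S := by
    intro j hj i
    have hjmem : j ∈ Finset.range (σ + 2) := Finset.mem_range.mpr (by omega)
    apply Set.mem_biUnion hjmem
    by_cases hi : i ∈ (q j).support
    · exact Set.mem_insert_iff.mpr (Or.inr ⟨i, hi, rfl⟩)
    · rw [Polynomial.notMem_support_iff.mp hi]
      exact Set.mem_insert _ _
  have hSfin : S.Finite := by
    refine Set.Finite.biUnion (Finset.finite_toSet _) fun j _ => ?_
    exact ((q j).support.finite_toSet.image _).insert 0
  haveI : Finite ↥S := hSfin.to_subtype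
  have hSint : ∀ x ∈ S, IsIntegral F x := by
    intro x hx
    have hxE : x ∈ E := by
      simp only [hS, Set.mem_iUnion] at hx
      obtain ⟨j, _, hx⟩ := hx
      rcases Set.mem_insert_iff.mp hx with h0 | ⟨i, _, hix⟩
      · rw [h0]; exact E.zero_mem
      · rw [← hix, hq]
        simp only [Polynomial.coeff_map]
        exact ((P' j).coeff i).2
    obtain ⟨qq, hq0, hqev⟩ := halg x hxE
    refine IsAlgebraic.isIntegral ⟨qq, hq0, ?_⟩
    rw [Polynomial.aeval_def, ← Polynomial.eval_map]
    exact hqev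
  set K := IntermediateField.adjoin F S with hK
  haveI : FiniteDimensional F K := IntermediateField.finiteDimensional_adjoin hSint
  set κ : K →+* ℂ := algebraMap K ℂ with hκdef
  have hκ : ∀ c : F, κ (algebraMap F K c) = (c : ℂ) := fun c =>
    (IsScalarTower.algebraMap_apply F K ℂ c).symm
  -- restrict the polynomials to K
  have hrestr : ∀ j, ∃ Q : Polynomial K, j ≤ σ + 1 → Q.map κ = q j := by
    intro j
    by_cases hj : j ≤ σ + 1
    · refine ⟨∑ i ∈ (q j).support,
        C (⟨(q j).coeff i, IntermediateField.subset_adjoin F S (hcoeffS j hj i)⟩ : K) * X ^ i,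
        fun _ => ?_⟩
      rw [Polynomial.map_sum]
      conv_rhs => rw [(q j).as_sum_support]
      refine Finset.sum_congr rfl fun i _ => ?_
      rw [Polynomial.map_mul, Polynomial.map_C, Polynomial.map_pow, Polynomial.map_X,
        C_mul_X_pow_eq_monomial]
      rfl
    · exact ⟨0, fun hc => absurd hc hj⟩
  choose P hP using hrestr
  have hPlead : P (σ + 1) ≠ 0 := by
    intro h0
    have := hP (σ + 1) le_rfl
    rw [h0, Polynomial.map_zero] at this
    have : P' (σ + 1) = 0 := by
      have hinj := Polynomial.map_injective E.subtype E.subtype_injective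
      exact hinj (by rw [← hq] at *; rw [Polynomial.map_zero]; exact this.symm ▸ rfl)
    exact hP'ne this
  have hrecK : ∀ n : ℕ, (∑ j ∈ Finset.range (σ + 2), evc κ (P j) n * a (n + j)) = 0 := by
    intro n
    rw [← hrec' n]
    refine Finset.sum_congr rfl fun j hj => ?_
    have hj' : j ≤ σ + 1 := by simpa using Nat.lt_succ_iff.mp (Finset.mem_range.mp hj)
    rw [evc, hP j hj']
  exact main_step F κ hκ a σ P hPlead hrecK
end

section
/- Let R be a subring of ℂ with quotient field contained in a field F ⊆ ℂ. If a sequence (a_n) ∈ R^ℕ is P-recursive over F, then it is P-recursive over Quot(R). -/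
/-- If a linear system with coefficients in a field `K` mapped into `ℂ` has a
nontrivial complex solution, it has a nontrivial solution in `K`. -/
lemma key_solution {ι : Type} [Fintype ι] [DecidableEq ι]
    {K : Type} [Field K] (f : K →+* ℂ) (M : ℕ → ι → K) (c : ι → ℂ) (hc : c ≠ 0)
    (hsol : ∀ n, ∑ i, f (M n i) * c i = 0) :
    ∃ d : ι → K, d ≠ 0 ∧ ∀ n, ∑ i, f (M n i) * f (d i) = 0 := by
  classical
  set φ : ℕ → Module.Dual K (ι → K) := fun n => ∑ i, M n i • LinearMap.proj i with hφdef
  have hφ : ∀ n (v : ι → K), φ n v = ∑ i, M n i * v i := by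
    intro n v
    simp [hφdef, smul_eq_mul]
  set Φ : Submodule K (Module.Dual K (ι → K)) := Submodule.span K (Set.range φ) with hΦdef
  by_cases hbot : Φ.dualCoannihilator = ⊥
  · -- Φ = ⊤, derive contradiction with c ≠ 0
    exfalso
    have hΦtop : Φ = ⊤ := by
      have h1 := Subspace.dualCoannihilator_dualAnnihilator_eq (W := Φ)
      rw [hbot, Submodule.dualAnnihilator_bot] at h1
      exact h1.symm
    obtain ⟨i, hci⟩ := Function.ne_iff.mp hc
    have hmem : (LinearMap.proj i : (ι → K) →ₗ[K] K) ∈ Φ := hΦtop ▸ Submodule.mem_top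
    rw [hΦdef] at hmem
    obtain ⟨w, hw⟩ := (Finsupp.mem_span_range_iff_exists_finsupp).mp hmem
    -- evaluate at Pi.single j 1
    have hdelta : ∀ j : ι, (∑ n ∈ w.support, w n * M n j) = (Pi.single j 1 : ι → K) i := by
      intro j
      have := congrArg (fun g : (ι → K) →ₗ[K] K => g (Pi.single j 1)) hw
      simp only [Finsupp.sum, LinearMap.coe_sum, Finset.sum_apply, LinearMap.smul_apply,
        LinearMap.proj_apply] at this
      rw [← this]
      refine Finset.sum_congr rfl fun n _ => ?_
      rw [hφ, smul_eq_mul]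
      congr 1
      simp [Pi.single_apply, mul_ite]
    apply hci
    have key : c i = ∑ j, f ((Pi.single j 1 : ι → K) i) * c j := by
      simp [Pi.single_apply, apply_ite f, ite_mul]
    rw [key]
    calc ∑ j, f ((Pi.single j 1 : ι → K) i) * c j
        = ∑ j, (∑ n ∈ w.support, f (w n) * f (M n j)) * c j := by
          refine Finset.sum_congr rfl fun j _ => ?_
          rw [← hdelta j, map_sum]
          simp [map_mul]
      _ = ∑ n ∈ w.support, f (w n) * ∑ j, f (M n j) * c j := by
          simp_rw [Finset.sum_mul, Finset.mul_sum]
          rw [Finset.sum_comm]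
          exact Finset.sum_congr rfl fun n _ => Finset.sum_congr rfl fun j _ => by ring
      _ = 0 := by simp [hsol]
  · obtain ⟨d, hdmem, hd0⟩ := Submodule.exists_mem_ne_zero_of_ne_bot hbot
    refine ⟨d, hd0, fun n => ?_⟩
    have hφn : φ n ∈ Φ := Submodule.subset_span ⟨n, rfl⟩
    have h0 := (Submodule.mem_dualCoannihilator d).mp hdmem (φ n) hφn
    rw [hφ] at h0
    have h1 : f (∑ i, M n i * d i) = 0 := by rw [h0]; simp
    rw [map_sum] at h1
    simpa [map_mul] using h1

/-- **Lemma.** If `R ⊆ F` and a sequence with terms in `R` is P-recursive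
over `F`, then it is P-recursive over the quotient field `Quot R` of `R`
inside `ℂ`. -/
theorem pRecursive_descend_quotient_field
    (R : Subring ℂ) (F Q : Subfield ℂ)
    (hRF : ∀ x : ℂ, x ∈ R → x ∈ F)
    (hQ : ∀ x : ℂ, x ∈ Q ↔ ∃ r ∈ R, ∃ s ∈ R, s ≠ 0 ∧ x = r / s)
    (a : ℕ → ℂ) (ha : ∀ n, a n ∈ R)
    (h : IsPRecursiveOver F a) :
    IsPRecursiveOver Q a := by
  classical
  obtain ⟨ρ, p, ⟨j₀, hj₀ρ, hj₀⟩, hrec⟩ := h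
  have hRQ : ∀ x : ℂ, x ∈ R → x ∈ Q := fun x hx =>
    (hQ x).mpr ⟨x, hx, 1, one_mem R, one_ne_zero, by simp⟩
  set D : ℕ := (Finset.range (ρ + 1)).sup (fun j => (p j).natDegree) with hD
  -- the coefficient matrix, with entries in Q
  have hMmem : ∀ (n : ℕ) (i : Fin (ρ + 1) × Fin (D + 1)),
      (n : ℂ) ^ (i.2 : ℕ) * a (n + (i.1 : ℕ)) ∈ Q := by
    intro n i
    exact hRQ _ (mul_mem (pow_mem (natCast_mem R n) _) (ha _))
  set M : ℕ → Fin (ρ + 1) × Fin (D + 1) → Q :=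
    fun n i => ⟨(n : ℂ) ^ (i.2 : ℕ) * a (n + (i.1 : ℕ)), hMmem n i⟩ with hM
  set c : Fin (ρ + 1) × Fin (D + 1) → ℂ :=
    fun i => ((p (i.1 : ℕ)).coeff (i.2 : ℕ) : ℂ) with hc
  have hdegle : ∀ j : Fin (ρ + 1), ((p (j : ℕ)).map F.subtype).natDegree < D + 1 := by
    intro j
    have h1 : ((p (j : ℕ)).map F.subtype).natDegree ≤ (p (j : ℕ)).natDegree :=
      Polynomial.natDegree_map_le
    have h2 : (p (j : ℕ)).natDegree ≤ D :=
      Finset.le_sup (f := fun j => (p j).natDegree) (Finset.mem_range.mpr j.isLt)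
    omega
  -- the evaluation as a finite sum
  have heval : ∀ (j : Fin (ρ + 1)) (n : ℕ),
      ((p (j : ℕ)).map F.subtype).eval (n : ℂ) =
        ∑ k : Fin (D + 1), ((p (j : ℕ)).coeff (k : ℕ) : ℂ) * (n : ℂ) ^ (k : ℕ) := by
    intro j n
    rw [Polynomial.eval_eq_sum_range' (hdegle j), Fin.sum_univ_eq_sum_range
      (fun k => ((p (j : ℕ)).coeff k : ℂ) * (n : ℂ) ^ k)]
    exact Finset.sum_congr rfl fun k _ => by rw [Polynomial.coeff_map]; rfl
  have hcne : c ≠ 0 := by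
    intro hc0
    apply hj₀
    have hdeg : (p j₀).natDegree < D + 1 := Nat.lt_succ_of_le
      (Finset.le_sup (f := fun j => (p j).natDegree)
        (Finset.mem_range.mpr (Nat.lt_succ_of_le hj₀ρ)))
    have := congrFun hc0 (⟨j₀, Nat.lt_succ_of_le hj₀ρ⟩, ⟨(p j₀).natDegree, hdeg⟩)
    simp only [hc, Pi.zero_apply] at this
    rw [← Polynomial.leadingCoeff_eq_zero, Polynomial.leadingCoeff]
    exact_mod_cast this
  have hsol : ∀ n, ∑ i, Q.subtype (M n i) * c i = 0 := by
    intro n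
    rw [Fintype.sum_prod_type]
    have := hrec n
    rw [← Fin.sum_univ_eq_sum_range
      (fun j => ((p j).map F.subtype).eval (n : ℂ) * a (n + j)) (ρ + 1)] at this
    rw [← this]
    refine Finset.sum_congr rfl fun j _ => ?_
    rw [heval j n, Finset.sum_mul]
    refine Finset.sum_congr rfl fun k _ => ?_
    simp only [hM, hc, Subfield.coe_subtype]
    ring
  obtain ⟨d, hd0, hdsol⟩ := key_solution Q.subtype M c hcne hsol
  -- build the polynomials over Q
  set q : ℕ → Polynomial Q := fun j =>
    if hj : j < ρ + 1 then
      ∑ k : Fin (D + 1), Polynomial.C (d (⟨j, hj⟩, k)) * Polynomial.X ^ (k : ℕ)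
    else 0 with hq
  refine ⟨ρ, q, ?_, ?_⟩
  · obtain ⟨⟨j₁, k₁⟩, hd1⟩ := Function.ne_iff.mp hd0
    refine ⟨(j₁ : ℕ), Nat.lt_succ_iff.mp j₁.isLt, ?_⟩
    intro hq0
    apply hd1
    have : (q (j₁ : ℕ)).coeff (k₁ : ℕ) = d (j₁, k₁) := by
      rw [hq]
      simp only [j₁.isLt, dif_pos, Fin.eta]
      rw [Polynomial.finset_sum_coeff]
      rw [Finset.sum_eq_single k₁]
      · simp
      · intro k _ hk
        have : (k₁ : ℕ) ≠ (k : ℕ) := fun h => hk (Fin.val_injective h).symm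
        simp [Polynomial.coeff_X_pow, this]
      · simp
    rw [hq0] at this
    simpa using this.symm
  · intro n
    rw [← Fin.sum_univ_eq_sum_range
      (fun j => ((q j).map Q.subtype).eval (n : ℂ) * a (n + j)) (ρ + 1)]
    have := hdsol n
    rw [Fintype.sum_prod_type] at this
    rw [← this]
    refine Finset.sum_congr rfl fun j _ => ?_
    have hqeval : ((q (j : ℕ)).map Q.subtype).eval (n : ℂ) =
        ∑ k : Fin (D + 1), (Q.subtype (d (j, k))) * (n : ℂ) ^ (k : ℕ) := by
      rw [hq]
      simp only [j.isLt, dif_pos, Fin.eta, Polynomial.map_sum, Polynomial.map_mul,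
        Polynomial.map_C, Polynomial.map_pow, Polynomial.map_X, Polynomial.eval_finset_sum,
        Polynomial.eval_mul, Polynomial.eval_C, Polynomial.eval_pow, Polynomial.eval_X]
    rw [hqeval, Finset.sum_mul]
    refine Finset.sum_congr rfl fun k _ => ?_
    simp only [hM, Subfield.coe_subtype]
    ring
end

section
/- Let R be a subring of ℂ and F a subfield of ℂ. The set D_{R,F} of D-finite numbers with respect to R and F—complex numbers that are limits of convergent sequences in R^ℕ which are P-recursive over F—is a subring of ℂ. Moreover, if R is an F-algebra then so is D_{R,F}. -/
/-- The set of D-finite numbers with respect to `R` and `F`: limits of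
convergent sequences with terms in `R` that are P-recursive over `F`. -/
def DFiniteNumbers (R : Subring ℂ) (F : Subfield ℂ) : Set ℂ :=
  {ξ : ℂ | ∃ a : ℕ → ℂ, (∀ n, a n ∈ R) ∧ IsPRecursiveOver F a ∧
    Filter.Tendsto a Filter.atTop (nhds ξ)}

open Filter Polynomial Submodule Finset

section OrbitSpan

variable (K : Type*) {M : Type*} [CommSemiring K] [AddCommMonoid M] [Module K M]

def orbitSpan (f : M → M) (x : M) : Submodule K M :=
  span K (Set.range fun n => f^[n] x)

variable {K}

theorem iterate_mem_orbitSpan (f : M → M) (x : M) (n : ℕ) : f^[n] x ∈ orbitSpan K f x :=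
  subset_span ⟨n, rfl⟩

theorem orbitSpan_add_le {G : Type*} [FunLike G M M] [AddHomClass G M M] (f : G) (x y : M) :
    orbitSpan K f (x + y) ≤ orbitSpan K f x ⊔ orbitSpan K f y := by
  refine span_le.mpr <| Set.range_subset_iff.mpr fun n => ?_
  rw [SetLike.mem_coe, iterate_map_add]
  exact add_mem (mem_sup_left (iterate_mem_orbitSpan _ _ n))
    (mem_sup_right (iterate_mem_orbitSpan _ _ n))

theorem orbitSpan_mul_le {A : Type*} [Semiring A] [Algebra K A] {G : Type*} [FunLike G A A]
    [MulHomClass G A A] (f : G) (x y : A) :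
    orbitSpan K f (x * y) ≤ orbitSpan K f x * orbitSpan K f y := by
  refine span_le.mpr <| Set.range_subset_iff.mpr fun n => ?_
  rw [SetLike.mem_coe, iterate_map_mul]
  exact mul_mem_mul (iterate_mem_orbitSpan _ _ n) (iterate_mem_orbitSpan _ _ n)

end OrbitSpan

section Noetherian

variable {K M : Type*} [CommRing K] [IsNoetherianRing K] [AddCommGroup M] [Module K M]

theorem fg_orbitSpan_add {G : Type*} [FunLike G M M] [AddHomClass G M M] {f : G} {x y : M}
    (hx : (orbitSpan K f x).FG) (hy : (orbitSpan K f y).FG) : (orbitSpan K f (x + y)).FG :=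
  (hx.sup hy).of_le (orbitSpan_add_le f x y)

theorem fg_orbitSpan_mul {A : Type*} [Ring A] [Algebra K A] {G : Type*} [FunLike G A A]
    [MulHomClass G A A] {f : G} {x y : A}
    (hx : (orbitSpan K f x).FG) (hy : (orbitSpan K f y).FG) : (orbitSpan K f (x * y)).FG :=
  (hx.mul hy).of_le (orbitSpan_mul_le f x y)

end Noetherian

section Field

variable {K M : Type*} [Field K] [AddCommGroup M] [Module K M]

theorem exists_linear_relation_of_fg_orbitSpan {f : M → M} {x : M} (h : (orbitSpan K f x).FG) :
    ∃ ρ, ∃ c : ℕ → K, (∃ j ≤ ρ, c j ≠ 0) ∧ ∑ j ∈ range (ρ + 1), c j • f^[j] x = 0 := by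
  have : Module.Finite K (orbitSpan K f x) := Module.Finite.iff_fg.mpr h
  obtain ⟨d, hd⟩ : ∃ d, Module.finrank K (orbitSpan K f x) = d := ⟨_, rfl⟩
  have hdep : ¬LinearIndependent K fun j : Fin (d + 1) =>
      (⟨f^[j] x, iterate_mem_orbitSpan f x j⟩ : orbitSpan K f x) := fun hli => by
    have := hli.fintype_card_le_finrank
    simp only [Fintype.card_fin, hd] at this
    omega
  obtain ⟨g, hg, i, hi⟩ := Fintype.not_linearIndependent_iff.mp hdep
  refine ⟨d, fun j => if hj : j < d + 1 then g ⟨j, hj⟩ else 0,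
    ⟨i, Nat.lt_succ_iff.mp i.isLt, by simp [i.is_le, hi]⟩, ?_⟩
  rw [← Fin.sum_univ_eq_sum_range (fun j => (if hj : j < d + 1 then g ⟨j, hj⟩ else 0) • f^[j] x)]
  simp only [Fin.is_lt, dif_pos, Fin.eta]
  simpa using congrArg Subtype.val hg

variable {τ : K →+* K}

theorem orbitSpan_le_span_of_iterate_mem {f : M →ₛₗ[τ] M} {x : M} {m : ℕ}
    (hm : f^[m] x ∈ span K ((fun j => f^[j] x) '' Set.Iio m)) :
    orbitSpan K f x ≤ span K ((fun j => f^[j] x) '' Set.Iio m) := by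
  set W := span K ((fun j => f^[j] x) '' Set.Iio m)
  have hle : ∀ k ≤ m, f^[k] x ∈ W := fun k hk => by
    rcases hk.lt_or_eq with hk | rfl
    · exact subset_span ⟨k, hk, rfl⟩
    · exact hm
  have hstable : W ≤ W.comap f := span_le.mpr <| by
    rintro _ ⟨j, hj, rfl⟩
    rw [SetLike.mem_coe, Submodule.mem_comap, ← Function.iterate_succ_apply' f]
    exact hle (j + 1) hj
  have hiter : ∀ n, f^[n] x ∈ W := fun n => by
    induction n with
    | zero => exact hle 0 m.zero_le
    | succ n ih =>
      rw [Function.iterate_succ_apply']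
      exact hstable ih
  exact span_le.mpr (Set.range_subset_iff.mpr hiter)

theorem fg_orbitSpan_of_linear_relation {f : M →ₛₗ[τ] M} {x : M} {m : ℕ} {c : ℕ → K} (hc : c m ≠ 0)
    (h : ∑ j ∈ range (m + 1), c j • f^[j] x = 0) : (orbitSpan K f x).FG := by
  refine (fg_span ((Set.finite_Iio m).image _)).of_le (orbitSpan_le_span_of_iterate_mem ?_)
  have hsolve : f^[m] x = -(c m)⁻¹ • ∑ j ∈ range m, c j • f^[j] x := by
    rw [sum_range_succ, add_eq_zero_iff_eq_neg] at h
    rw [h, neg_smul, smul_neg, neg_neg, smul_smul, inv_mul_cancel₀ hc, one_smul]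
  rw [hsolve]
  exact smul_mem _ _ <| sum_mem fun j hj =>
    smul_mem _ _ (subset_span ⟨j, Set.mem_Iio.mpr (mem_range.mp hj), rfl⟩)

theorem fg_orbitSpan_iff_exists_linear_relation (f : M →ₛₗ[τ] M) (x : M) :
    (orbitSpan K f x).FG ↔
      ∃ ρ, ∃ c : ℕ → K, (∃ j ≤ ρ, c j ≠ 0) ∧ ∑ j ∈ range (ρ + 1), c j • f^[j] x = 0 := by
  classical
  refine ⟨exists_linear_relation_of_fg_orbitSpan, fun ⟨ρ, c, ⟨j, hjρ, hj⟩, h⟩ => ?_⟩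
  set m := Nat.findGreatest (fun j => c j ≠ 0) ρ
  have hmρ : m ≤ ρ := Nat.findGreatest_le ρ
  refine fg_orbitSpan_of_linear_relation (m := m)
    (Nat.findGreatest_spec (P := fun j => c j ≠ 0) hjρ hj) ?_
  rw [← h]
  refine sum_subset (range_subset_range.mpr (by omega)) fun k hk hkm => ?_
  have : c k = 0 := not_not.mp <|
    Nat.findGreatest_is_greatest (by simpa using hkm) (by simpa [Nat.lt_succ_iff] using hk)
  rw [this, zero_smul]

end Field

theorem exists_integral_linear_relation {R K M : Type*} [CommRing R] [Nontrivial R] [Field K]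
    [Algebra R K] [IsFractionRing R K] [AddCommGroup M] [Module K M] {v : ℕ → M} {ρ : ℕ} {c : ℕ → K}
    (hc : ∃ j ≤ ρ, c j ≠ 0) (h : ∑ j ∈ range (ρ + 1), c j • v j = 0) :
    ∃ p : ℕ → R, (∃ j ≤ ρ, p j ≠ 0) ∧ ∑ j ∈ range (ρ + 1), algebraMap R K (p j) • v j = 0 := by
  obtain ⟨b, hb⟩ := IsLocalization.exist_integer_multiples (nonZeroDivisors R) (range (ρ + 1)) c
  choose! p hp using hb
  have hp' : ∀ j ∈ range (ρ + 1), algebraMap R K (p j) = algebraMap R K b * c j := fun j hj => by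
    rw [hp j hj, Algebra.smul_def]
  obtain ⟨j, hjρ, hcj⟩ := hc
  refine ⟨p, ⟨j, hjρ, fun hpj => ?_⟩, ?_⟩
  · have hb0 : algebraMap R K b ≠ 0 := IsFractionRing.to_map_ne_zero_of_mem_nonZeroDivisors b.2
    have := hp' j (mem_range.mpr (Nat.lt_succ_of_le hjρ))
    rw [hpj, map_zero, eq_comm, mul_eq_zero] at this
    exact hcj (this.resolve_left hb0)
  · rw [sum_congr rfl fun j hj => by rw [hp' j hj, mul_smul], ← smul_sum, h, smul_zero]

theorem Polynomial.eventually_eval_natCast_ne_zero {R : Type*} [CommRing R] [IsDomain R]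
    [CharZero R] {p : R[X]} (hp : p ≠ 0) : ∀ᶠ n : ℕ in atTop, p.eval (n : R) ≠ 0 := by
  rw [← Nat.cofinite_eq_atTop]
  exact ((finite_setOfPred_isRoot hp).preimage Nat.cast_injective.injOn).eventually_cofinite_notMem

theorem isPRecursiveOver_of_eventually {F : Subfield ℂ} {a : ℕ → ℂ} {ρ : ℕ} {p : ℕ → F[X]}
    (hp : ∃ j ≤ ρ, p j ≠ 0)
    (h : ∀ᶠ n : ℕ in atTop,
      ∑ j ∈ range (ρ + 1), ((p j).map F.subtype).eval (n : ℂ) * a (n + j) = 0) :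
    IsPRecursiveOver F a := by
  obtain ⟨N, hN⟩ := eventually_atTop.mp h
  obtain ⟨j, hjρ, hpj⟩ := hp
  -- `descPochhammer F N` vanishes at `0, …, N - 1`, where the recurrence may fail.
  refine ⟨ρ, fun j => descPochhammer F N * p j,
    ⟨j, hjρ, mul_ne_zero (monic_descPochhammer F N).ne_zero hpj⟩, fun n => ?_⟩
  simp_rw [Polynomial.map_mul, eval_mul, descPochhammer_map, mul_assoc, ← mul_sum]
  rcases lt_or_ge n N with hn | hn
  · rw [descPochhammer_eval_coe_nat_of_lt hn, zero_mul]
  · rw [hN n hn, mul_zero]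

noncomputable section

-- A type synonym, so that the `RatFunc F`-algebra structure, which depends on `F`, is an instance.
def SeqGerm (_F : Subfield ℂ) : Type := Germ (atTop : Filter ℕ) ℂ

namespace SeqGerm

variable (F : Subfield ℂ)

instance : CommRing (SeqGerm F) := inferInstanceAs (CommRing (Germ _ ℂ))

def mk : (ℕ → ℂ) →+* SeqGerm F := Germ.coeRingHom atTop

theorem mk_eq_mk_iff {a b : ℕ → ℂ} : mk F a = mk F b ↔ a =ᶠ[atTop] b := Germ.coe_eq

def polyEval : F[X] →+* SeqGerm F :=
  (mk F).comp (RingHom.pi fun n => (evalRingHom (n : ℂ)).comp (mapRingHom F.subtype))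

theorem polyEval_apply (p : F[X]) :
    polyEval F p = mk F fun n => (p.map F.subtype).eval (n : ℂ) := rfl

theorem isUnit_polyEval {p : F[X]} (hp : p ≠ 0) : IsUnit (polyEval F p) := by
  refine isUnit_iff_exists_inv.mpr ⟨mk F fun n => ((p.map F.subtype).eval (n : ℂ))⁻¹, ?_⟩
  rw [polyEval_apply, ← map_mul, ← map_one (mk F), mk_eq_mk_iff]
  have hp' : p.map F.subtype ≠ 0 := (Polynomial.map_ne_zero_iff F.subtype_injective).mpr hp
  filter_upwards [eventually_eval_natCast_ne_zero hp'] with n hn using mul_inv_cancel₀ hn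

def ratEval : RatFunc F →+* SeqGerm F :=
  IsLocalization.lift (M := nonZeroDivisors F[X]) fun p =>
    isUnit_polyEval F (nonZeroDivisors.ne_zero p.2)

instance : Algebra (RatFunc F) (SeqGerm F) := (ratEval F).toAlgebra

theorem algebraMap_algebraMap (p : F[X]) :
    algebraMap (RatFunc F) (SeqGerm F) (algebraMap F[X] (RatFunc F) p) = polyEval F p :=
  IsLocalization.lift_eq _ p

def shift : SeqGerm F →+* SeqGerm F where
  toFun x := Germ.compTendsto (x : Germ atTop ℂ) (· + 1) (tendsto_add_atTop_nat 1)
  map_one' := rfl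
  map_mul' x y := Germ.inductionOn x fun _ => Germ.inductionOn y fun _ => rfl
  map_zero' := rfl
  map_add' x y := Germ.inductionOn x fun _ => Germ.inductionOn y fun _ => rfl

theorem shift_mk (a : ℕ → ℂ) : shift F (mk F a) = mk F fun n => a (n + 1) := rfl

theorem iterate_shift_mk (a : ℕ → ℂ) (j : ℕ) :
    (shift F)^[j] (mk F a) = mk F fun n => a (n + j) := by
  induction j with
  | zero => rfl
  | succ j ih =>
    rw [Function.iterate_succ_apply', ih, shift_mk]
    simp only [add_right_comm _ 1 j, add_assoc]

def ratShift : RatFunc F →+* RatFunc F :=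
  IsLocalization.map (M := nonZeroDivisors F[X]) (T := nonZeroDivisors F[X]) (RatFunc F)
    (compRingHom (X + C 1 : F[X])) fun p hp => by
      rw [Submonoid.mem_comap, coe_compRingHom_apply, mem_nonZeroDivisors_iff_ne_zero,
        comp_X_add_C_ne_zero_iff]
      exact nonZeroDivisors.ne_zero hp

theorem shift_polyEval (p : F[X]) : shift F (polyEval F p) = polyEval F (p.comp (X + C 1)) := by
  rw [polyEval_apply, polyEval_apply, shift_mk]
  congr 1
  funext n
  simp [Polynomial.map_comp]

theorem shift_algebraMap (c : RatFunc F) :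
    shift F (algebraMap (RatFunc F) (SeqGerm F) c) =
      algebraMap (RatFunc F) (SeqGerm F) (ratShift F c) := by
  refine RingHom.congr_fun (IsLocalization.ringHom_ext (nonZeroDivisors F[X])
    (j := (shift F).comp (algebraMap (RatFunc F) (SeqGerm F)))
    (k := (algebraMap (RatFunc F) (SeqGerm F)).comp (ratShift F)) (RingHom.ext fun p => ?_)) c
  simp only [RingHom.comp_apply, ratShift, IsLocalization.map_eq, algebraMap_algebraMap,
    shift_polyEval, coe_compRingHom_apply]

def shiftₛₗ : SeqGerm F →ₛₗ[ratShift F] SeqGerm F where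
  __ := shift F
  map_smul' c x := by
    rw [Algebra.smul_def, Algebra.smul_def]
    exact (map_mul (shift F) _ _).trans (congrArg (· * shift F x) (shift_algebraMap F c))

theorem sum_smul_iterate_shift_mk (ρ : ℕ) (p : ℕ → F[X]) (a : ℕ → ℂ) :
    ∑ j ∈ range (ρ + 1), algebraMap F[X] (RatFunc F) (p j) • (shift F)^[j] (mk F a) =
      mk F fun n => ∑ j ∈ range (ρ + 1), ((p j).map F.subtype).eval (n : ℂ) * a (n + j) := by
  rw [← sum_fn, map_sum]
  refine sum_congr rfl fun j _ => ?_
  rw [Algebra.smul_def, algebraMap_algebraMap, iterate_shift_mk, polyEval_apply, ← map_mul]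
  rfl

end SeqGerm

end

section PRecursive

open SeqGerm

variable {F : Subfield ℂ}

theorem isPRecursiveOver_iff_fg_orbitSpan (a : ℕ → ℂ) :
    IsPRecursiveOver F a ↔ (orbitSpan (RatFunc F) (shift F) (mk F a)).FG := by
  change _ ↔ (orbitSpan (RatFunc F) (shiftₛₗ F) (mk F a)).FG
  rw [fg_orbitSpan_iff_exists_linear_relation]
  constructor
  · rintro ⟨ρ, p, ⟨j, hjρ, hpj⟩, h⟩
    refine ⟨ρ, fun j => algebraMap F[X] (RatFunc F) (p j),
      ⟨j, hjρ, RatFunc.algebraMap_ne_zero hpj⟩, ?_⟩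
    rw [← map_zero (mk F)]
    exact (sum_smul_iterate_shift_mk F ρ p a).trans ((mk_eq_mk_iff F).mpr (.of_forall h))
  · rintro ⟨ρ, c, hc, h⟩
    obtain ⟨p, hp, hrel⟩ := exists_integral_linear_relation (R := F[X]) hc h
    rw [← map_zero (mk F)] at hrel
    exact isPRecursiveOver_of_eventually hp
      ((mk_eq_mk_iff F).mp ((sum_smul_iterate_shift_mk F ρ p a).symm.trans hrel))

theorem isPRecursiveOver_const (c : ℂ) : IsPRecursiveOver F fun _ => c :=
  ⟨1, fun j => if j = 0 then 1 else -1, ⟨0, zero_le_one, by simp⟩,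
    fun n => by simp [sum_range_succ]⟩

theorem IsPRecursiveOver.add {a b : ℕ → ℂ} (ha : IsPRecursiveOver F a)
    (hb : IsPRecursiveOver F b) : IsPRecursiveOver F (a + b) := by
  rw [isPRecursiveOver_iff_fg_orbitSpan] at *
  rw [map_add]
  exact fg_orbitSpan_add ha hb

theorem IsPRecursiveOver.mul {a b : ℕ → ℂ} (ha : IsPRecursiveOver F a)
    (hb : IsPRecursiveOver F b) : IsPRecursiveOver F (a * b) := by
  rw [isPRecursiveOver_iff_fg_orbitSpan] at *
  rw [map_mul]
  exact fg_orbitSpan_mul ha hb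

theorem IsPRecursiveOver.neg {a : ℕ → ℂ} (ha : IsPRecursiveOver F a) :
    IsPRecursiveOver F (-a) := by
  rw [← neg_one_mul a]
  exact (isPRecursiveOver_const (-1)).mul ha

end PRecursive

def dFiniteSubring (R : Subring ℂ) (F : Subfield ℂ) : Subring ℂ where
  carrier := DFiniteNumbers R F
  zero_mem' := ⟨0, fun _ => R.zero_mem, isPRecursiveOver_const 0, tendsto_const_nhds⟩
  one_mem' := ⟨1, fun _ => R.one_mem, isPRecursiveOver_const 1, tendsto_const_nhds⟩
  add_mem' := fun ⟨a, haR, ha, hlim⟩ ⟨b, hbR, hb, hlim'⟩ =>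
    ⟨a + b, fun n => R.add_mem (haR n) (hbR n), ha.add hb, hlim.add hlim'⟩
  mul_mem' := fun ⟨a, haR, ha, hlim⟩ ⟨b, hbR, hb, hlim'⟩ =>
    ⟨a * b, fun n => R.mul_mem (haR n) (hbR n), ha.mul hb, hlim.mul hlim'⟩
  neg_mem' := fun ⟨a, haR, ha, hlim⟩ => ⟨-a, fun n => R.neg_mem (haR n), ha.neg, hlim.neg⟩

/-- **Proposition.** `D_{R,F}` is a subring of `ℂ`; moreover, if `R` is an
`F`-algebra (i.e. `F ⊆ R`), then so is `D_{R,F}` (it is a subring of `ℂ`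
containing `F`). -/
theorem dFiniteNumbers_subring
    (R : Subring ℂ) (F : Subfield ℂ) :
    (∃ S : Subring ℂ, (S : Set ℂ) = DFiniteNumbers R F) ∧
    ((∀ x : ℂ, x ∈ F → x ∈ R) →
      ∀ x : ℂ, x ∈ F → x ∈ DFiniteNumbers R F) :=
  ⟨⟨dFiniteSubring R F, rfl⟩, fun hFR x hx =>
    ⟨fun _ => x, fun _ => hFR x hx, isPRecursiveOver_const x, tendsto_const_nhds⟩⟩
end

section
/- The class C_F of limits of convergent C-finite sequences over a subfield F of ℂ equals F itself: a complex number ξ is the limit of a convergent sequence (a_n) ∈ F^ℕ satisfying a nontrivial linear recurrence with constant coefficients in F if and only if ξ ∈ F. -/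
open Polynomial Filter Finset

private lemma cf_tendsto_shift {a : ℕ → ℂ} {ξ : ℂ}
    (ha : Filter.Tendsto a Filter.atTop (nhds ξ)) (j : ℕ) :
    Filter.Tendsto (fun n => a (n + j)) Filter.atTop (nhds ξ) :=
  ha.comp (tendsto_add_atTop_nat j)

private lemma cf_tendsto_S (F : Subfield ℂ) (R : Polynomial F) (a : ℕ → ℂ) {ξ : ℂ}
    (ha : Filter.Tendsto a Filter.atTop (nhds ξ)) :
    Filter.Tendsto
      (fun n => ∑ j ∈ Finset.range (R.natDegree + 1), (R.coeff j : ℂ) * a (n + j))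
      Filter.atTop (nhds (((R.eval 1 : F) : ℂ) * ξ)) := by
  have h1 : ((R.eval 1 : F) : ℂ) * ξ
      = ∑ j ∈ Finset.range (R.natDegree + 1), (R.coeff j : ℂ) * ξ := by
    rw [Polynomial.eval_eq_sum_range]
    push_cast
    rw [Finset.sum_mul]
    simp
  rw [h1]
  exact tendsto_finset_sum _ fun j _ => (cf_tendsto_shift ha j).const_mul _

private lemma cf_shift_identity (F : Subfield ℂ) (Q : Polynomial F) (hQ : Q ≠ 0)
    (a : ℕ → ℂ) (n : ℕ) :
    ∑ j ∈ Finset.range (((X - C 1) * Q).natDegree + 1),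
        ((((X - C 1) * Q).coeff j : F) : ℂ) * a (n + j)
      = (∑ j ∈ Finset.range (Q.natDegree + 1), (Q.coeff j : ℂ) * a (n + 1 + j))
        - ∑ j ∈ Finset.range (Q.natDegree + 1), (Q.coeff j : ℂ) * a (n + j) := by
  have hdeg : ((X - C 1) * Q).natDegree = Q.natDegree + 1 := by
    rw [natDegree_mul (X_sub_C_ne_zero 1) hQ, natDegree_X_sub_C]
    ring
  have hc : ∀ j, ((((X - C 1) * Q).coeff j : F) : ℂ)
      = (((X * Q).coeff j : F) : ℂ) - ((Q.coeff j : F) : ℂ) := by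
    intro j
    rw [sub_mul, Polynomial.coeff_sub, C_1, one_mul]
    push_cast
    ring
  rw [hdeg]
  simp_rw [hc, sub_mul, Finset.sum_sub_distrib]
  congr 1
  · -- first sum: peel off j = 0
    rw [Finset.sum_range_succ']
    have h0 : (((X * Q).coeff 0 : F) : ℂ) = 0 := by
      simp [Polynomial.mul_coeff_zero]
    rw [h0, zero_mul, add_zero]
    refine Finset.sum_congr rfl fun i _ => ?_
    rw [Polynomial.coeff_X_mul, show n + (i + 1) = n + 1 + i by omega]
  · -- second sum: drop the top zero coefficient
    rw [Finset.sum_range_succ]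
    have : Q.coeff (Q.natDegree + 1) = 0 :=
      Polynomial.coeff_eq_zero_of_natDegree_lt (by omega)
    simp [this]

private lemma cf_main_aux (F : Subfield ℂ) :
    ∀ d : ℕ, ∀ P : Polynomial F, P.natDegree = d → P ≠ 0 → ∀ a : ℕ → ℂ, ∀ ξ : ℂ,
    (∀ n, a n ∈ F) →
    (∀ n, ∑ j ∈ Finset.range (P.natDegree + 1), (P.coeff j : ℂ) * a (n + j) = 0) →
    Filter.Tendsto a Filter.atTop (nhds ξ) → ξ ∈ F := by
  intro d
  induction d using Nat.strong_induction_on with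
  | _ d ih =>
  intro P hPd hP a ξ haF hrec ha
  have hlim : ((P.eval 1 : F) : ℂ) * ξ = 0 := by
    have h1 := cf_tendsto_S F P a ha
    have h0 : Filter.Tendsto
        (fun n => ∑ j ∈ Finset.range (P.natDegree + 1), (P.coeff j : ℂ) * a (n + j))
        Filter.atTop (nhds (0 : ℂ)) := by
      simp_rw [hrec]
      exact tendsto_const_nhds
    exact tendsto_nhds_unique h1 h0
  by_cases h1 : P.eval 1 = 0
  · obtain ⟨Q, hPQ⟩ : (X - C 1) ∣ P := dvd_iff_isRoot.2 h1
    have hQ : Q ≠ 0 := by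
      rintro rfl
      exact hP (by rw [hPQ, mul_zero])
    set b : ℕ → ℂ := fun n =>
      ∑ j ∈ Finset.range (Q.natDegree + 1), (Q.coeff j : ℂ) * a (n + j) with hb
    have hbstep : ∀ n, b (n + 1) = b n := by
      intro n
      have h2 := cf_shift_identity F Q hQ a n
      rw [← hPQ, hrec n] at h2
      exact sub_eq_zero.mp h2.symm
    have hbconst : ∀ n, b n = b 0 := by
      intro n
      induction n with
      | zero => rfl
      | succ k hk => rw [hbstep k, hk]
    have hblim : Filter.Tendsto b Filter.atTop (nhds (((Q.eval 1 : F) : ℂ) * ξ)) :=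
      cf_tendsto_S F Q a ha
    have hbeq : ((Q.eval 1 : F) : ℂ) * ξ = b 0 := by
      have hc : Filter.Tendsto b Filter.atTop (nhds (b 0)) := by
        have : b = fun _ => b 0 := funext hbconst
        rw [this]
        exact tendsto_const_nhds
      exact tendsto_nhds_unique hblim hc
    have hb0F : b 0 ∈ F :=
      F.sum_mem fun j _ => F.mul_mem (SetLike.coe_mem _) (haF _)
    have hdeg : P.natDegree = Q.natDegree + 1 := by
      rw [hPQ, natDegree_mul (X_sub_C_ne_zero 1) hQ, natDegree_X_sub_C]
      ring
    by_cases h2 : Q.eval 1 = 0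
    · have hb0 : ∀ n, b n = 0 := by
        intro n
        rw [hbconst n, ← hbeq, h2]
        simp
      exact ih Q.natDegree (by omega) Q rfl hQ a ξ haF (fun n => hb0 n) ha
    · have hne : ((Q.eval 1 : F) : ℂ) ≠ 0 := by
        exact_mod_cast fun h => h2 (Subtype.ext (by exact_mod_cast h))
      have : ξ = b 0 / ((Q.eval 1 : F) : ℂ) := by
        field_simp
        linear_combination hbeq
      rw [this]
      exact F.div_mem hb0F (SetLike.coe_mem _)
  · have hne : ((P.eval 1 : F) : ℂ) ≠ 0 := by
      exact_mod_cast fun h => h1 (Subtype.ext (by exact_mod_cast h))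
    have : ξ = 0 := (mul_eq_zero.mp hlim).resolve_left hne
    rw [this]
    exact F.zero_mem

/-- **Proposition.** For a subfield `F` of `ℂ`, the class `C_F` of limits of
convergent C-finite sequences over `F` is `F` itself: `ξ` is the limit of a
convergent sequence in `F^ℕ` satisfying a nontrivial linear recurrence with
constant coefficients in `F` if and only if `ξ ∈ F`. -/
theorem cFinite_limits_eq_self
    (F : Subfield ℂ) (ξ : ℂ) :
    (∃ a : ℕ → ℂ, (∀ n, a n ∈ F) ∧
      (∃ ρ : ℕ, ∃ c : ℕ → ℂ, (∀ j ≤ ρ, c j ∈ F) ∧ (∃ j ≤ ρ, c j ≠ 0) ∧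
        ∀ n : ℕ, ∑ j ∈ Finset.range (ρ + 1), c j * a (n + j) = 0) ∧
      Filter.Tendsto a Filter.atTop (nhds ξ)) ↔ ξ ∈ F := by
  constructor
  · rintro ⟨a, haF, ⟨ρ, c, hcF, ⟨j₀, hj₀, hj₀ne⟩, hrec⟩, ha⟩
    -- build the polynomial over F
    set c' : ℕ → F := fun j => if h : j ≤ ρ then ⟨c j, hcF j h⟩ else 0 with hc'
    set P : Polynomial F := ∑ j ∈ Finset.range (ρ + 1), Polynomial.monomial j (c' j)
      with hPdef
    have hcoeff : ∀ k, P.coeff k = if k ∈ Finset.range (ρ + 1) then c' k else 0 := by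
      intro k
      rw [hPdef, Polynomial.finset_sum_coeff]
      simp_rw [Polynomial.coeff_monomial]
      exact Finset.sum_ite_eq' (Finset.range (ρ + 1)) k c'
    have hcoeff' : ∀ k ≤ ρ, (P.coeff k : ℂ) = c k := by
      intro k hk
      rw [hcoeff]
      simp [Finset.mem_range, Nat.lt_succ_iff.mpr hk, hc', dif_pos hk]
    have hP : P ≠ 0 := by
      intro h
      apply hj₀ne
      have := hcoeff' j₀ hj₀
      rw [h] at this
      simpa using this.symm
    have hPle : P.natDegree ≤ ρ := by
      rw [Polynomial.natDegree_le_iff_coeff_eq_zero]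
      intro N hN
      rw [hcoeff, if_neg (by simp only [Finset.mem_range]; omega)]
    have hrec' : ∀ n, ∑ j ∈ Finset.range (P.natDegree + 1), (P.coeff j : ℂ) * a (n + j) = 0 := by
      intro n
      have hsub : ∑ j ∈ Finset.range (P.natDegree + 1), (P.coeff j : ℂ) * a (n + j)
          = ∑ j ∈ Finset.range (ρ + 1), (P.coeff j : ℂ) * a (n + j) := by
        refine Finset.sum_subset (Finset.range_subset_range.2 (by omega)) ?_
        intro j _ hj'
        have hlt : P.natDegree < j := by
          simp only [Finset.mem_range, not_lt] at hj'
          omega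
        simp [Polynomial.coeff_eq_zero_of_natDegree_lt hlt]
      rw [hsub, ← hrec n]
      refine Finset.sum_congr rfl fun j hj => ?_
      rw [hcoeff' j (by simpa [Nat.lt_succ_iff] using hj)]
    exact cf_main_aux F P.natDegree P rfl hP a ξ haF hrec' ha
  · intro hξ
    refine ⟨fun _ => ξ, fun _ => hξ, ⟨1, fun j => if j = 0 then 1 else if j = 1 then -1 else 0,
      ?_, ⟨0, by norm_num, by norm_num⟩, ?_⟩, tendsto_const_nhds⟩
    · intro j _
      dsimp only
      split_ifs <;> simp [F.one_mem, F.neg_mem, F.zero_mem]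
    · intro n
      simp [Finset.sum_range_succ]
end
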